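/- arXiv:1306.2931 — 10 statements merged into one kernel-verified Lean document; each statement's English description precedes it below -/
import Mathlib

section
/- A finite simple graph G = (V,E) on n vertices satisfies σ(G) = n if and only if G is a two-factor, that is, every vertex of G has degree exactly two. -/
/-- The palette of a vertex `v` under an edge coloring `c`: the set of colors assigned
to the edges incident to `v`. -/
def palette {V : Type*} {G : SimpleGraph V} {k : ℕ} (c : G.edgeSet → Fin k) (v : V) :
    Set (Fin k) := {i | ∃ e : G.edgeSet, v ∈ (e : Sym2 V) ∧ c e = i}

/-- An edge coloring is `2`-valid if every vertex sees at most two colors. -/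
def TwoValid {V : Type*} {G : SimpleGraph V} {k : ℕ} (c : G.edgeSet → Fin k) : Prop :=
  ∀ v : V, (palette c v).ncard ≤ 2

/-- `σ(G)`: the maximum number of colors of a `2`-valid edge coloring of `G`
(an edge coloring with `k` colors being a surjective map from the edges to `Fin k`). -/
noncomputable def sigma2 {V : Type*} (G : SimpleGraph V) : ℕ :=
  sSup {k : ℕ | ∃ c : G.edgeSet → Fin k, Function.Surjective c ∧ TwoValid c}

/-!
Count the pairs `(v, i)` such that `v` is incident to an edge of color `i` in two ways: every
vertex sees at most two colors and every color is seen by at least the two endpoints of one of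
its edges, so `2k ≤ 2n`. With `k = n` both counts are tight: every color is seen by exactly two
vertices, hence colors a single edge, so `G` has `n` edges, while every vertex sees two colors
and so has degree at least two. As the degrees sum to `2n`, they all equal two. Conversely a
two-factor has `n` edges, and giving each its own color is `2`-valid.
-/

lemma Finset.sum_ncard_eq_sum_ncard_setOf_mem {α β : Type*} [Fintype α] [Fintype β]
    (p : α → Set β) : ∑ a, (p a).ncard = ∑ b, {a | b ∈ p a}.ncard := by
  classical
  simp only [Set.ncard_eq_toFinset_card', ← Set.filter_mem_univ_eq_toFinset, Finset.card_filter]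
  exact Finset.sum_comm

lemma SimpleGraph.sum_ncard_neighborSet {V : Type*} [Fintype V] (G : SimpleGraph V) :
    ∑ v, (G.neighborSet v).ncard = 2 * Nat.card G.edgeSet := by
  classical
  simp only [← Nat.card_coe_set_eq, Nat.card_eq_fintype_card, G.card_neighborSet_eq_degree,
    G.sum_degrees_eq_twice_card_edges, G.edgeFinset_card]

section
variable {V : Type*} {G : SimpleGraph V} {k : ℕ}

def colorSupport (c : G.edgeSet → Fin k) (i : Fin k) : Set V := {v | i ∈ palette c v}

lemma exists_adj_and_eq_mk (e : G.edgeSet) : ∃ a b, G.Adj a b ∧ (e : Sym2 V) = s(a, b) := by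
  obtain ⟨e, he⟩ := e
  induction e using Sym2.ind with
  | _ a b => exact ⟨a, b, he, rfl⟩

lemma mem_colorSupport_of_mem (c : G.edgeSet → Fin k) {e : G.edgeSet} {v : V}
    (hv : v ∈ (e : Sym2 V)) : v ∈ colorSupport c (c e) :=
  ⟨e, hv, rfl⟩

lemma pair_subset_colorSupport (c : G.edgeSet → Fin k) {e : G.edgeSet} {a b : V}
    (he : (e : Sym2 V) = s(a, b)) : {a, b} ⊆ colorSupport c (c e) := by
  rintro v (rfl | rfl) <;> exact mem_colorSupport_of_mem c (by simp [he])

lemma ncard_palette_le_ncard_neighborSet [Finite V] (c : G.edgeSet → Fin k) (v : V) :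
    (palette c v).ncard ≤ (G.neighborSet v).ncard := by
  classical
  have hpalette : palette c v = c '' {e : G.edgeSet | v ∈ (e : Sym2 V)} := by
    ext i
    simp [palette]
  have hincident : {e : G.edgeSet | v ∈ (e : Sym2 V)}.ncard = (G.neighborSet v).ncard := by
    rw [← Nat.card_coe_set_eq, ← Nat.card_coe_set_eq,
      ← Nat.card_congr (G.incidenceSetEquivNeighborSet v)]
    exact Nat.card_congr
      { toFun := fun e => ⟨e.1.1, e.1.2, e.2⟩
        invFun := fun e => ⟨⟨e.1, e.2.1⟩, e.2.2⟩ }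
  rw [hpalette, ← hincident]
  exact Set.ncard_image_le

lemma two_le_ncard_colorSupport [Finite V] {c : G.edgeSet → Fin k} (hs : Function.Surjective c)
    (i : Fin k) : 2 ≤ (colorSupport c i).ncard := by
  obtain ⟨e, rfl⟩ := hs i
  obtain ⟨a, b, hab, he⟩ := exists_adj_and_eq_mk e
  exact (Set.ncard_pair hab.ne).symm.le.trans (Set.ncard_le_ncard (pair_subset_colorSupport c he))

lemma mem_iff_mem_colorSupport [Finite V] (c : G.edgeSet → Fin k) {e : G.edgeSet}
    (he : (colorSupport c (c e)).ncard = 2) (v : V) :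
    v ∈ (e : Sym2 V) ↔ v ∈ colorSupport c (c e) := by
  refine ⟨mem_colorSupport_of_mem c, fun hv => ?_⟩
  obtain ⟨a, b, hab, hab_eq⟩ := exists_adj_and_eq_mk e
  have hsupport := Set.eq_of_subset_of_ncard_le (pair_subset_colorSupport c hab_eq)
    (by rw [he, Set.ncard_pair hab.ne])
  rw [← hsupport] at hv
  rcases hv with rfl | rfl <;> simp [hab_eq]

lemma injective_of_ncard_colorSupport_eq_two [Finite V] {c : G.edgeSet → Fin k}
    (hc : ∀ i, (colorSupport c i).ncard = 2) : Function.Injective c := fun e f hef =>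
  Subtype.ext <| Sym2.ext fun v => by
    rw [mem_iff_mem_colorSupport c (hc _), mem_iff_mem_colorSupport c (hc _), hef]

variable [Fintype V]

lemma sum_ncard_palette_eq_sum_ncard_colorSupport (c : G.edgeSet → Fin k) :
    ∑ v, (palette c v).ncard = ∑ i, (colorSupport c i).ncard :=
  Finset.sum_ncard_eq_sum_ncard_setOf_mem (palette c)

lemma sum_ncard_palette_le {c : G.edgeSet → Fin k} (hv : TwoValid c) :
    ∑ v, (palette c v).ncard ≤ 2 * Fintype.card V := by
  simpa [mul_comm] using Finset.sum_le_sum fun v (_ : v ∈ Finset.univ) => hv v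

lemma two_mul_le_sum_ncard_colorSupport {c : G.edgeSet → Fin k} (hs : Function.Surjective c) :
    2 * k ≤ ∑ i, (colorSupport c i).ncard := by
  simpa [mul_comm] using Finset.sum_le_sum fun i (_ : i ∈ Finset.univ) =>
    two_le_ncard_colorSupport hs i

lemma le_card_of_surjective_of_twoValid {c : G.edgeSet → Fin k}
    (hs : Function.Surjective c) (hv : TwoValid c) : k ≤ Fintype.card V := by
  have := sum_ncard_palette_eq_sum_ncard_colorSupport c
  have := sum_ncard_palette_le hv
  have := two_mul_le_sum_ncard_colorSupport hs
  omega

lemma ncard_palette_eq_two_and_ncard_colorSupport_eq_two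
    {c : G.edgeSet → Fin (Fintype.card V)} (hs : Function.Surjective c) (hv : TwoValid c) :
    (∀ v, (palette c v).ncard = 2) ∧ ∀ i, (colorSupport c i).ncard = 2 := by
  have hcount := sum_ncard_palette_eq_sum_ncard_colorSupport c
  have hpalette := sum_ncard_palette_le hv
  have hsupport := two_mul_le_sum_ncard_colorSupport hs
  refine ⟨fun v => (Finset.sum_eq_sum_iff_of_le fun v _ => hv v).mp ?_ v (Finset.mem_univ v),
    fun i => ((Finset.sum_eq_sum_iff_of_le fun i _ =>
      two_le_ncard_colorSupport hs i).mp ?_ i (Finset.mem_univ i)).symm⟩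
  all_goals simp only [Finset.sum_const, Finset.card_univ, Fintype.card_fin, smul_eq_mul]; omega

lemma ncard_neighborSet_eq_two_of_twoValid {c : G.edgeSet → Fin (Fintype.card V)}
    (hs : Function.Surjective c) (hv : TwoValid c) (v : V) : (G.neighborSet v).ncard = 2 := by
  obtain ⟨hpalette, hsupport⟩ := ncard_palette_eq_two_and_ncard_colorSupport_eq_two hs hv
  have hedges : Nat.card G.edgeSet = Fintype.card V := by
    rw [Nat.card_eq_of_bijective c ⟨injective_of_ncard_colorSupport_eq_two hsupport, hs⟩,
      Nat.card_eq_fintype_card, Fintype.card_fin]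
  have hdegree_ge : ∀ w ∈ Finset.univ, 2 ≤ (G.neighborSet w).ncard := fun w _ =>
    hpalette w ▸ ncard_palette_le_ncard_neighborSet c w
  refine ((Finset.sum_eq_sum_iff_of_le hdegree_ge).mp ?_ v (Finset.mem_univ v)).symm
  rw [G.sum_ncard_neighborSet, hedges, Finset.sum_const, Finset.card_univ, smul_eq_mul, mul_comm]

lemma exists_twoValid_of_ncard_neighborSet_eq_two (h : ∀ v, (G.neighborSet v).ncard = 2) :
    ∃ c : G.edgeSet → Fin (Fintype.card V), Function.Surjective c ∧ TwoValid c := by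
  have hedges : Nat.card G.edgeSet = Fintype.card V := by
    have := G.sum_ncard_neighborSet
    simp only [h, Finset.sum_const, Finset.card_univ, smul_eq_mul] at this
    omega
  exact ⟨Finite.equivFinOfCardEq hedges, (Finite.equivFinOfCardEq hedges).surjective,
    fun v => (h v) ▸ ncard_palette_le_ncard_neighborSet _ v⟩

lemma sigma2_eq_card_iff : sigma2 G = Fintype.card V ↔
    ∃ c : G.edgeSet → Fin (Fintype.card V), Function.Surjective c ∧ TwoValid c := by
  rw [sigma2]
  set S := {k : ℕ | ∃ c : G.edgeSet → Fin k, Function.Surjective c ∧ TwoValid c}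
  have hbdd : ∀ k ∈ S, k ≤ Fintype.card V := fun k ⟨c, hs, hv⟩ =>
    le_card_of_surjective_of_twoValid hs hv
  refine ⟨fun h => ?_, fun hmem => le_antisymm (csSup_le ⟨_, hmem⟩ hbdd) (le_csSup ⟨_, hbdd⟩ hmem)⟩
  rcases S.eq_empty_or_nonempty with hS | hS
  · -- `sSup ∅ = 0`, so this case only arises for empty `V`
    have hV : IsEmpty V := by
      rw [← Fintype.card_eq_zero_iff, ← h, hS, csSup_empty, Nat.bot_eq_zero]
    exact ⟨fun e => isEmptyElim (exists_adj_and_eq_mk e).choose,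
      fun i => absurd i.2 (by simp), isEmptyElim⟩
  · exact h ▸ Nat.sSup_mem hS ⟨_, hbdd⟩

end

/-- A finite simple graph on `n` vertices satisfies `σ(G) = n` if and only if every vertex
of `G` has degree exactly two (i.e. `G` is a two-factor). -/
theorem stmt1 {V : Type*} [Fintype V] (G : SimpleGraph V) :
    sigma2 G = Fintype.card V ↔ ∀ v : V, (G.neighborSet v).ncard = 2 := by
  rw [sigma2_eq_card_iff]
  exact ⟨fun ⟨_, hs, hv⟩ => ncard_neighborSet_eq_two_of_twoValid hs hv,
    exists_twoValid_of_ncard_neighborSet_eq_two⟩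
end

section
/- Let G = (V,E) be a finite simple graph with m edges and let k ≥ 1 be an integer. If m < k, then G has no 2-valid edge coloring with k colors. If G has a matching of size at least k−1 and m ≥ k, then G has a 2-valid edge coloring with exactly k colors. -/
section Coloring

variable {V : Type*} {G : SimpleGraph V} {k : ℕ}

theorem le_ncard_edgeSet_of_surjective [Finite V] {c : G.edgeSet → Fin k}
    (hc : Function.Surjective c) :
    k ≤ G.edgeSet.ncard := by
  simpa [Nat.card_coe_set_eq] using Nat.card_le_card_of_surjective c hc

theorem TwoValid.of_eq_off_matching {M : Set (Sym2 V)}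
    (hM : M.Pairwise fun e f => ∀ x ∈ e, x ∉ f) {c : G.edgeSet → Fin k} (i₀ : Fin k)
    (hc : ∀ e : G.edgeSet, (e : Sym2 V) ∉ M → c e = i₀) : TwoValid c := by
  intro v
  obtain ⟨j, hj⟩ : ∃ j, palette c v ⊆ {i₀, j} := by
    by_cases hv : ∃ e₀ : G.edgeSet, (e₀ : Sym2 V) ∈ M ∧ v ∈ (e₀ : Sym2 V)
    · obtain ⟨e₀, he₀M, hve₀⟩ := hv
      refine ⟨c e₀, ?_⟩
      rintro _ ⟨e, hve, rfl⟩
      by_cases heM : (e : Sym2 V) ∈ M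
      · have : e = e₀ := Subtype.ext <| by_contra fun hne => hM heM he₀M hne v hve hve₀
        exact Or.inr (congrArg c this)
      · exact Or.inl (hc e heM)
    · refine ⟨i₀, ?_⟩
      rintro _ ⟨e, hve, rfl⟩
      exact Or.inl (hc e fun heM => hv ⟨e, heM, hve⟩)
  calc (palette c v).ncard ≤ ({i₀, j} : Set (Fin k)).ncard := Set.ncard_le_ncard hj
    _ ≤ ({j} : Set (Fin k)).ncard + 1 := Set.ncard_insert_le _ _
    _ = 2 := by rw [Set.ncard_singleton]

theorem exists_surjective_twoValid_of_matching {n : ℕ} (S : Finset (Sym2 V))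
    (hSG : ∀ e ∈ S, e ∈ G.edgeSet) (hS : (S : Set (Sym2 V)).Pairwise fun e f => ∀ x ∈ e, x ∉ f)
    (hcard : S.card = n) (hout : ∃ e ∈ G.edgeSet, e ∉ S) :
    ∃ c : G.edgeSet → Fin (n + 1), Function.Surjective c ∧ TwoValid c := by
  classical
  let f : S ≃ Fin n := S.equivFinOfCardEq hcard
  let c : G.edgeSet → Fin (n + 1) := fun e =>
    if h : (e : Sym2 V) ∈ S then (f ⟨e, h⟩).succ else 0
  refine ⟨c, ?_, TwoValid.of_eq_off_matching hS 0 fun e he => dif_neg he⟩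
  refine Fin.cases ?_ fun i => ?_
  · obtain ⟨e, heG, heS⟩ := hout
    exact ⟨⟨e, heG⟩, dif_neg heS⟩
  · refine ⟨⟨f.symm i, hSG _ (f.symm i).2⟩, ?_⟩
    simp [c]

end Coloring

/-- If `G` has `m < k` edges then `G` has no `2`-valid edge coloring with `k` colors;
if `G` has a matching of size at least `k - 1` and `m ≥ k` edges, then `G` has a `2`-valid
edge coloring with exactly `k` colors. -/
theorem stmt2 {V : Type*} [Fintype V] (G : SimpleGraph V) (k : ℕ) (hk : 1 ≤ k) :
    (G.edgeSet.ncard < k → ¬ ∃ c : G.edgeSet → Fin k, Function.Surjective c ∧ TwoValid c) ∧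
    (∀ M : Finset (Sym2 V), (∀ e ∈ M, e ∈ G.edgeSet) →
      (∀ e ∈ M, ∀ f ∈ M, e ≠ f → ∀ x : V, x ∈ e → x ∉ f) →
      k - 1 ≤ M.card → k ≤ G.edgeSet.ncard →
      ∃ c : G.edgeSet → Fin k, Function.Surjective c ∧ TwoValid c) := by
  refine ⟨fun hlt ⟨c, hc, _⟩ => (le_ncard_edgeSet_of_surjective hc).not_gt hlt, ?_⟩
  intro M hMG hM hcard hm
  obtain ⟨n, rfl⟩ := Nat.exists_eq_add_of_le' hk
  obtain ⟨S, hSM, hS⟩ := Finset.exists_subset_card_eq (s := M) (n := n) (by simpa using hcard)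
  refine exists_surjective_twoValid_of_matching S (fun e he => hMG e (hSM he))
    (fun e he f hf hne => hM e (hSM he) f (hSM hf) hne) hS ?_
  exact Set.exists_mem_notMem_of_ncard_lt_ncard (s := (S : Set (Sym2 V)))
    (by rw [Set.ncard_coe_finset]; omega)
end

section
/- Let G be a finite simple graph on n vertices, let c be a 2-valid edge coloring of G using at least n−k colors, and let H be a character subgraph of G with respect to c. If H has s connected components that are paths (all remaining components of H being cycles), then s ≤ k. -/
open Finset

namespace SimpleGraph

variable {V : Type*} {H : SimpleGraph V}

theorem edgeSet_eq_range_of_adj_iff {ι : Type*} {f : ι → Sym2 V}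
    (hH : ∀ x y, H.Adj x y ↔ ∃ i, f i = s(x, y)) : H.edgeSet = Set.range f := by
  ext z
  induction z using Sym2.ind with
  | _ x y => simp only [mem_edgeSet, hH, Set.mem_range]

theorem ncard_neighborSet_eq_ncard_incidenceSet (v : V) :
    (H.neighborSet v).ncard = (H.incidenceSet v).ncard := by
  classical
  rw [← Nat.card_coe_set_eq, ← Nat.card_coe_set_eq]
  exact Nat.card_congr (H.incidenceSetEquivNeighborSet v).symm

theorem ncard_neighborSet_eq_degree (v : V) [Fintype (H.neighborSet v)] :
    (H.neighborSet v).ncard = H.degree v := by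
  rw [Set.ncard_eq_toFinset_card']
  rfl

variable [Fintype V] [DecidableRel H.Adj]

theorem ConnectedComponent.exists_ne_odd_degree (C : H.ConnectedComponent) {v : V}
    (hv : v ∈ C.supp) (hodd : Odd (H.degree v)) : ∃ w ∈ C.supp, w ≠ v ∧ Odd (H.degree w) := by
  classical
  have hdeg (u : C.supp) : (H.induce C.supp).degree u = H.degree u :=
    degree_induce_of_neighborSet_subset fun _ hw => C.mem_supp_of_adj_mem_supp u.2 hw
  obtain ⟨w, hwv, hw⟩ :=
    (H.induce C.supp).exists_ne_odd_degree_of_exists_odd_degree ⟨v, hv⟩ (by rwa [hdeg])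
  exact ⟨w, w.2, fun h => hwv (Subtype.ext h), by rwa [← hdeg]⟩

theorem two_mul_ncard_components_odd_degree_le :
    2 * {C : H.ConnectedComponent | ∃ v, H.connectedComponentMk v = C ∧ Odd (H.degree v)}.ncard
      ≤ #{v | Odd (H.degree v)} := by
  classical
  have := Fintype.ofFinite H.ConnectedComponent
  set S := {C : H.ConnectedComponent | ∃ v, H.connectedComponentMk v = C ∧ Odd (H.degree v)}
  have hmaps : ((univ.filter fun v => Odd (H.degree v) : Finset V) : Set V).MapsTo
      H.connectedComponentMk S.toFinset := fun v hv =>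
    Set.mem_toFinset.2 ⟨v, rfl, by simpa using hv⟩
  rw [Set.ncard_eq_toFinset_card', card_eq_sum_card_fiberwise hmaps, mul_comm, ← smul_eq_mul]
  refine card_nsmul_le_sum _ _ _ fun C hC => ?_
  obtain ⟨v, rfl, hv⟩ : ∃ v, H.connectedComponentMk v = C ∧ Odd (H.degree v) := by
    simpa [S] using hC
  obtain ⟨w, hw, hwv, hwodd⟩ := (H.connectedComponentMk v).exists_ne_odd_degree rfl hv
  exact one_lt_card.2 ⟨v, by simp [hv], w, by simpa [hwodd] using hw, hwv.symm⟩

theorem card_odd_degree_add_two_mul_card_edgeFinset_le (hdeg : ∀ v, H.degree v ≤ 2) :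
    #{v | Odd (H.degree v)} + 2 * #H.edgeFinset ≤ 2 * Fintype.card V := by
  classical
  rw [← sum_degrees_eq_twice_card_edges, card_filter, ← sum_add_distrib, ← card_univ, mul_comm,
    ← smul_eq_mul, ← sum_const]
  refine sum_le_sum fun v _ => ?_
  have := hdeg v
  split_ifs with h <;> rw [Nat.odd_iff] at h <;> omega

end SimpleGraph

section CharacterSubgraph

variable {V : Type*} {G H : SimpleGraph V} {k : ℕ} {c : G.edgeSet → Fin k} {e : Fin k → G.edgeSet}

theorem ncard_neighborSet_le_ncard_palette (he : ∀ i, c (e i) = i)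
    (hH : ∀ x y, H.Adj x y ↔ ∃ i, (e i : Sym2 V) = s(x, y)) (v : V) :
    (H.neighborSet v).ncard ≤ (palette c v).ncard := by
  have hinc : H.incidenceSet v ⊆ (fun i => (e i : Sym2 V)) '' {i | v ∈ (e i : Sym2 V)} := by
    rintro z ⟨hz, hvz⟩
    rw [SimpleGraph.edgeSet_eq_range_of_adj_iff hH] at hz
    obtain ⟨i, rfl⟩ := hz
    exact ⟨i, hvz, rfl⟩
  calc (H.neighborSet v).ncard = (H.incidenceSet v).ncard :=
        H.ncard_neighborSet_eq_ncard_incidenceSet v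
    _ ≤ _ := Set.ncard_le_ncard hinc
    _ ≤ {i | v ∈ (e i : Sym2 V)}.ncard := Set.ncard_image_le
    _ ≤ (palette c v).ncard := Set.ncard_le_ncard fun i hi => ⟨e i, hi, he i⟩

theorem ncard_edgeSet_eq_card_colors (he : ∀ i, c (e i) = i)
    (hH : ∀ x y, H.Adj x y ↔ ∃ i, (e i : Sym2 V) = s(x, y)) : H.edgeSet.ncard = k := by
  rw [SimpleGraph.edgeSet_eq_range_of_adj_iff hH,
    Set.ncard_range_of_injective (f := fun i => (e i : Sym2 V))
      (Subtype.coe_injective.comp (Function.LeftInverse.injective he)),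
    Nat.card_eq_fintype_card, Fintype.card_fin]

end CharacterSubgraph

theorem stmt5_general {V : Type*} [Fintype V] (G : SimpleGraph V) (k k' : ℕ)
    (hk' : Fintype.card V - k ≤ k')
    (c : G.edgeSet → Fin k') (h2 : TwoValid c)
    (e : Fin k' → G.edgeSet) (he : ∀ i, c (e i) = i)
    (H : SimpleGraph V) (hH : ∀ x y : V, H.Adj x y ↔ ∃ i, (e i : Sym2 V) = s(x, y)) :
    {C : H.ConnectedComponent | ∃ v : V, H.connectedComponentMk v = C ∧
      (H.neighborSet v).ncard = 1}.ncard ≤ k := by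
  classical
  have hdeg (v : V) : H.degree v ≤ 2 := by
    rw [← H.ncard_neighborSet_eq_degree]
    exact (ncard_neighborSet_le_ncard_palette he hH v).trans (h2 v)
  have hpath : {C : H.ConnectedComponent | ∃ v, H.connectedComponentMk v = C ∧
      (H.neighborSet v).ncard = 1} =
      {C | ∃ v, H.connectedComponentMk v = C ∧ Odd (H.degree v)} := by
    ext C
    refine exists_congr fun v => and_congr_right fun _ => ?_
    rw [H.ncard_neighborSet_eq_degree, Nat.odd_iff]
    have := hdeg v
    omega
  have hedges : #H.edgeFinset = k' := by
    rw [← ncard_edgeSet_eq_card_colors he hH, ← Set.ncard_coe_finset, SimpleGraph.coe_edgeFinset]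
  have hcount := H.card_odd_degree_add_two_mul_card_edgeFinset_le hdeg
  have hcomponents := H.two_mul_ncard_components_odd_degree_le
  rw [hpath]
  omega

/-- If `c` is a `2`-valid edge coloring of `G` (on `n` vertices) using at least `n - k`
colors and `H` is a character subgraph of `G` with respect to `c`, then the number of
connected components of `H` that are paths (i.e. contain a vertex of degree one,
the other components being cycles) is at most `k`. -/
theorem stmt5 {V : Type*} [Fintype V] (G : SimpleGraph V) (k k' : ℕ)
    (hk' : Fintype.card V - k ≤ k')
    (c : G.edgeSet → Fin k') (hsurj : Function.Surjective c) (h2 : TwoValid c)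
    (e : Fin k' → G.edgeSet) (he : ∀ i, c (e i) = i)
    (H : SimpleGraph V) (hH : ∀ x y : V, H.Adj x y ↔ ∃ i, (e i : Sym2 V) = s(x, y)) :
    {C : H.ConnectedComponent | ∃ v : V, H.connectedComponentMk v = C ∧
      (H.neighborSet v).ncard = 1}.ncard ≤ k :=
  stmt5_general G k k' hk' c h2 e he H hH
end

section
/- Let G be a finite simple graph on n vertices, let c be a 2-valid edge coloring of G using at least n−k colors, and let H be a character subgraph of G with respect to c. Then the number of vertices of G that do not belong to H is at most k; equivalently, |V(H)| ≥ n−k. -/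
/-!
Pick one edge `e i` of each color. A vertex `v` lies only on edges whose colors are in its
palette, and the `e i` have pairwise distinct colors, so `v` lies on at most two of them. Counting
incidences between the `k'` chosen edges and the vertices they cover, with two endpoints per edge
and at most two chosen edges per vertex, gives `2 k' ≤ 2 |V(H)|`, i.e. `|V(H)| ≥ k' ≥ n - k`.
-/

open Finset

theorem Finset.card_le_card_of_sym2_incidence_le_two {ι V : Type*} [DecidableEq V]
    (s : Finset ι) (t : Finset V) (f : ι → Sym2 V) (hdiag : ∀ i ∈ s, ¬(f i).IsDiag)
    (hmem : ∀ i ∈ s, ∀ v ∈ f i, v ∈ t) (hdeg : ∀ v ∈ t, #{i ∈ s | v ∈ f i} ≤ 2) :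
    #s ≤ #t := by
  have hends : ∀ i ∈ s, 2 ≤ #(t.bipartiteAbove (fun i v => v ∈ f i) i) := fun i hi => by
    have hends_eq : t.bipartiteAbove (fun i v => v ∈ f i) i = (f i).toFinset := by
      ext v
      simpa [Sym2.mem_toFinset] using hmem i hi v
    rw [hends_eq, Sym2.card_toFinset_of_not_isDiag _ (hdiag i hi)]
  have hcount := card_mul_le_card_mul (fun i v => v ∈ f i) hends hdeg
  omega

theorem TwoValid.card_filter_mem_le_two {V : Type*} [DecidableEq V] {G : SimpleGraph V} {k : ℕ}
    {c : G.edgeSet → Fin k} (h2 : TwoValid c) {e : Fin k → G.edgeSet} (he : ∀ i, c (e i) = i)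
    (v : V) : #{i | v ∈ (e i : Sym2 V)} ≤ 2 := by
  have hsub : (({i | v ∈ (e i : Sym2 V)} : Finset (Fin k)) : Set (Fin k)) ⊆ palette c v :=
    fun i hi => ⟨e i, by simpa using hi, he i⟩
  calc #{i | v ∈ (e i : Sym2 V)} ≤ (palette c v).ncard := by
        rw [← Set.ncard_coe_finset]
        exact Set.ncard_le_ncard hsub
    _ ≤ 2 := h2 v

theorem stmt6_general {V : Type*} [Fintype V] (G : SimpleGraph V) (k k' : ℕ)
    (hk' : Fintype.card V - k ≤ k')
    (c : G.edgeSet → Fin k') (h2 : TwoValid c)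
    (e : Fin k' → G.edgeSet) (he : ∀ i, c (e i) = i) :
    {v : V | ∀ i : Fin k', v ∉ (e i : Sym2 V)}.ncard ≤ k ∧
    Fintype.card V - k ≤ {v : V | ∃ i : Fin k', v ∈ (e i : Sym2 V)}.ncard := by
  classical
  set S : Finset V := {v | ∃ i : Fin k', v ∈ (e i : Sym2 V)}
  have hcovered : {v : V | ∃ i : Fin k', v ∈ (e i : Sym2 V)} = S := by ext; simp [S]
  have huncovered : {v : V | ∀ i : Fin k', v ∉ (e i : Sym2 V)} = (S : Set V)ᶜ := by
    ext; simp [S]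
  have hk'S : k' ≤ #S := by
    simpa using card_le_card_of_sym2_incidence_le_two univ S (fun i => (e i : Sym2 V))
      (fun i _ => G.not_isDiag_of_mem_edgeSet (e i).2) (fun i _ v hv => by simpa [S] using ⟨i, hv⟩)
      (fun v _ => by simpa using h2.card_filter_mem_le_two he v)
  rw [huncovered, Set.ncard_compl, hcovered, Set.ncard_coe_finset, Nat.card_eq_fintype_card]
  have hS_le := S.card_le_univ
  omega

/-- If `c` is a `2`-valid edge coloring of `G` (on `n` vertices) using at least `n - k`
colors and `H` is a character subgraph of `G` with respect to `c` (with edges `e i`),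
then at most `k` vertices of `G` do not belong to `H`; equivalently `|V(H)| ≥ n - k`. -/
theorem stmt6 {V : Type*} [Fintype V] (G : SimpleGraph V) (k k' : ℕ)
    (hk' : Fintype.card V - k ≤ k')
    (c : G.edgeSet → Fin k') (hsurj : Function.Surjective c) (h2 : TwoValid c)
    (e : Fin k' → G.edgeSet) (he : ∀ i, c (e i) = i) :
    {v : V | ∀ i : Fin k', v ∉ (e i : Sym2 V)}.ncard ≤ k ∧
    Fintype.card V - k ≤ {v : V | ∃ i : Fin k', v ∈ (e i : Sym2 V)}.ncard :=
  stmt6_general G k k' hk' c h2 e he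
end

section
/- Let G be a finite simple graph on n vertices, let c be a 2-valid edge coloring of G using at least n−k colors, let H be a character subgraph of G with respect to c, and let T be the set of vertices of H that have degree exactly 2 in H. Then every vertex of G has at most six neighbors in T. -/
lemma Set.Finite.ncard_biUnion_le_ncard_mul {ι α : Type*} {t : Set ι} (ht : t.Finite)
    {s : ι → Set α} {n : ℕ} (hs : ∀ i ∈ t, (s i).ncard ≤ n) :
    (⋃ i ∈ t, s i).ncard ≤ t.ncard * n := by
  lift t to Finset ι using ht
  calc (⋃ i ∈ (t : Set ι), s i).ncard ≤ ∑ i ∈ t, (s i).ncard := by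
        simpa only [Finset.mem_coe] using t.set_ncard_biUnion_le s
    _ ≤ t.card * n := Finset.sum_le_card_nsmul t _ n hs
    _ = (t : Set ι).ncard * n := by rw [Set.ncard_coe_finset]

lemma Sym2.setOf_mem_mk {α : Type*} (x y : α) : {v | v ∈ s(x, y)} = {x, y} := by
  ext; simp

lemma Sym2.finite_setOf_mem {α : Type*} (z : Sym2 α) : {x | x ∈ z}.Finite := by
  induction z with
  | h x y => rw [Sym2.setOf_mem_mk]; exact Set.toFinite _

lemma Sym2.ncard_setOf_mem_le_two {α : Type*} (z : Sym2 α) : {x | x ∈ z}.ncard ≤ 2 := by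
  induction z with
  | h x y =>
    rw [Sym2.setOf_mem_mk]
    exact (Set.ncard_insert_le x {y}).trans (by rw [Set.ncard_singleton])

section CharacterSubgraph

variable {V : Type*} {G : SimpleGraph V} {k : ℕ} {c : G.edgeSet → Fin k}

lemma TwoValid.eq_or_eq_of_mem_palette (h2 : TwoValid c) {v : V} {i j l : Fin k}
    (hi : i ∈ palette c v) (hj : j ∈ palette c v) (hl : l ∈ palette c v) (hjl : j ≠ l) :
    i = j ∨ i = l := by
  by_contra! hne
  have h3 : 2 < (palette c v).ncard :=
    (Set.two_lt_ncard_iff (Set.toFinite _)).mpr ⟨i, j, l, hi, hj, hl, hne.1, hne.2, hjl⟩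
  exact absurd (h2 v) h3.not_ge

lemma mem_palette_of_mem {v : V} {ε : G.edgeSet} (hv : v ∈ (ε : Sym2 V)) :
    c ε ∈ palette c v :=
  ⟨ε, hv, rfl⟩

lemma exists_ne_mem_of_ncard_neighborSet_eq_two {e : Fin k → G.edgeSet} {H : SimpleGraph V}
    (hH : ∀ x y : V, H.Adj x y ↔ ∃ i, (e i : Sym2 V) = s(x, y)) {v : V}
    (hv : (H.neighborSet v).ncard = 2) :
    ∃ j l, j ≠ l ∧ v ∈ (e j : Sym2 V) ∧ v ∈ (e l : Sym2 V) := by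
  obtain ⟨w₁, w₂, hw, hN⟩ := Set.ncard_eq_two.mp hv
  obtain ⟨j, hj⟩ := (hH v w₁).mp (show w₁ ∈ H.neighborSet v by simp [hN])
  obtain ⟨l, hl⟩ := (hH v w₂).mp (show w₂ ∈ H.neighborSet v by simp [hN])
  refine ⟨j, l, ?_, by simp [hj], by simp [hl]⟩
  rintro rfl
  exact hw (Sym2.congr_right.mp (hj.symm.trans hl))

lemma mem_edge_color_of_adj_of_ncard_neighborSet_eq_two (h2 : TwoValid c)
    {e : Fin k → G.edgeSet} (he : ∀ i, c (e i) = i) {H : SimpleGraph V}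
    (hH : ∀ x y : V, H.Adj x y ↔ ∃ i, (e i : Sym2 V) = s(x, y)) {u v : V} (huv : G.Adj u v)
    (hv : (H.neighborSet v).ncard = 2) :
    v ∈ (e (c ⟨s(u, v), huv⟩) : Sym2 V) := by
  obtain ⟨j, l, hjl, hj, hl⟩ := exists_ne_mem_of_ncard_neighborSet_eq_two hH hv
  have hjv : j ∈ palette c v := he j ▸ mem_palette_of_mem hj
  have hlv : l ∈ palette c v := he l ▸ mem_palette_of_mem hl
  have huv_v : c ⟨s(u, v), huv⟩ ∈ palette c v := mem_palette_of_mem (Sym2.mem_mk_right u v)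
  rcases h2.eq_or_eq_of_mem_palette huv_v hjv hlv hjl with h | h <;> rw [h] <;> assumption

lemma ncard_neighborSet_inter_degree_two_le_four (h2 : TwoValid c)
    {e : Fin k → G.edgeSet} (he : ∀ i, c (e i) = i) {H : SimpleGraph V}
    (hH : ∀ x y : V, H.Adj x y ↔ ∃ i, (e i : Sym2 V) = s(x, y)) (u : V) :
    (G.neighborSet u ∩ {v : V | (H.neighborSet v).ncard = 2}).ncard ≤ 4 := by
  have hsub : G.neighborSet u ∩ {v : V | (H.neighborSet v).ncard = 2} ⊆
      ⋃ i ∈ palette c u, {v | v ∈ (e i : Sym2 V)} := by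
    rintro v ⟨huv, hv⟩
    exact Set.mem_biUnion (mem_palette_of_mem (ε := ⟨s(u, v), huv⟩) (Sym2.mem_mk_left u v))
      (mem_edge_color_of_adj_of_ncard_neighborSet_eq_two h2 he hH huv hv)
  calc _ ≤ (⋃ i ∈ palette c u, {v | v ∈ (e i : Sym2 V)}).ncard :=
        Set.ncard_le_ncard hsub ((Set.toFinite _).biUnion fun _ _ ↦ Sym2.finite_setOf_mem _)
    _ ≤ (palette c u).ncard * 2 :=
        (Set.toFinite _).ncard_biUnion_le_ncard_mul fun _ _ ↦ Sym2.ncard_setOf_mem_le_two _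
    _ ≤ 4 := by linarith [h2 u]

end CharacterSubgraph

theorem stmt8_general {V : Type*} (G : SimpleGraph V) (k' : ℕ)
    (c : G.edgeSet → Fin k') (h2 : TwoValid c)
    (e : Fin k' → G.edgeSet) (he : ∀ i, c (e i) = i)
    (H : SimpleGraph V) (hH : ∀ x y : V, H.Adj x y ↔ ∃ i, (e i : Sym2 V) = s(x, y)) :
    ∀ u : V, (G.neighborSet u ∩ {v : V | (H.neighborSet v).ncard = 2}).ncard ≤ 6 :=
  fun u ↦ (ncard_neighborSet_inter_degree_two_le_four h2 he hH u).trans (by norm_num)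

/-- If `c` is a `2`-valid edge coloring of `G` (on `n` vertices) using at least `n - k`
colors, `H` is a character subgraph of `G` with respect to `c`, and `T` is the set of
vertices of degree exactly `2` in `H`, then every vertex of `G` has at most six
neighbors in `T`. -/
theorem stmt8 {V : Type*} [Fintype V] (G : SimpleGraph V) (k k' : ℕ)
    (hk' : Fintype.card V - k ≤ k')
    (c : G.edgeSet → Fin k') (hsurj : Function.Surjective c) (h2 : TwoValid c)
    (e : Fin k' → G.edgeSet) (he : ∀ i, c (e i) = i)
    (H : SimpleGraph V) (hH : ∀ x y : V, H.Adj x y ↔ ∃ i, (e i : Sym2 V) = s(x, y)) :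
    ∀ u : V, (G.neighborSet u ∩ {v : V | (H.neighborSet v).ncard = 2}).ncard ≤ 6 :=
  stmt8_general G k' c h2 e he H hH
end

section
/- Let G be a finite simple graph on n vertices that admits a 2-valid edge coloring using at least n−k colors. Then the maximum degree of G is at most 3k+6. -/
/-!
Fix a vertex `v` and count the pairs `(u, i)` with `i` a color in the palette of `u` but not
in that of `v`. Every such color is used on some edge, whose two endpoints both carry it, so
there are at least `2 (k' - 2)` pairs. Conversely `v` contributes no pair, a neighbour `u` of
`v` at most one (the color of `uv` already lies in the palette of `v`), and any other vertex at
most two. Hence `2 (k' - 2) ≤ 2 (n - 1) - deg v`, i.e. `deg v ≤ 2 (n - k') + 2 ≤ 2k + 2`.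
-/

open Finset

section Palette

variable {V : Type*} {G : SimpleGraph V} {k : ℕ} (c : G.edgeSet → Fin k)

noncomputable def paletteFinset (v : V) : Finset (Fin k) :=
  (Set.toFinite (palette c v)).toFinset

@[simp]
lemma mem_paletteFinset {v : V} {i : Fin k} : i ∈ paletteFinset c v ↔ i ∈ palette c v :=
  Set.Finite.mem_toFinset _

lemma mem_palette_of_mem_edge (e : G.edgeSet) {v : V} (hv : v ∈ (e : Sym2 V)) :
    c e ∈ palette c v :=
  ⟨e, hv, rfl⟩

variable {c}

lemma TwoValid.card_paletteFinset_le (h2 : TwoValid c) (v : V) : #(paletteFinset c v) ≤ 2 := by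
  rw [paletteFinset, ← Set.ncard_eq_toFinset_card]
  exact h2 v

lemma TwoValid.card_paletteFinset_sdiff_le_one (h2 : TwoValid c) {u v : V} (h : G.Adj u v) :
    #(paletteFinset c u \ paletteFinset c v) ≤ 1 := by
  set j := c ⟨s(u, v), h⟩
  have hju : j ∈ paletteFinset c u :=
    (mem_paletteFinset c).2 (mem_palette_of_mem_edge c _ (Sym2.mem_mk_left u v))
  have hjv : j ∈ paletteFinset c v :=
    (mem_paletteFinset c).2 (mem_palette_of_mem_edge c _ (Sym2.mem_mk_right u v))
  calc #(paletteFinset c u \ paletteFinset c v)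
      ≤ #((paletteFinset c u).erase j) := card_le_card fun i hi => by
        rw [mem_sdiff] at hi
        exact mem_erase.2 ⟨fun hij => hi.2 (hij ▸ hjv), hi.1⟩
    _ = #(paletteFinset c u) - 1 := card_erase_of_mem hju
    _ ≤ 1 := by have := h2.card_paletteFinset_le u; omega

lemma TwoValid.card_paletteFinset_sdiff_add_le [DecidableEq V] [DecidableRel G.Adj]
    (h2 : TwoValid c) (u v : V) :
    #(paletteFinset c u \ paletteFinset c v) + (if G.Adj v u then 1 else 0) +
      (if u = v then 2 else 0) ≤ 2 := by
  by_cases huv : u = v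
  · subst huv
    simp
  by_cases hadj : G.Adj v u
  · simpa [hadj, huv] using h2.card_paletteFinset_sdiff_le_one hadj.symm
  · simpa [hadj, huv] using (card_le_card sdiff_subset).trans (h2.card_paletteFinset_le u)

variable [Fintype V]

lemma two_le_card_filter_mem_paletteFinset (e : G.edgeSet) :
    2 ≤ #{u | c e ∈ paletteFinset c u} := by
  classical
  obtain ⟨e, he⟩ := e
  induction e using Sym2.ind with
  | h a b =>
    have hab : a ≠ b := G.ne_of_adj he
    calc 2 = #{a, b} := (card_pair hab).symm
      _ ≤ #{u | c ⟨s(a, b), he⟩ ∈ paletteFinset c u} := card_le_card <| by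
        intro u hu
        rw [mem_filter, mem_paletteFinset]
        refine ⟨mem_univ u, mem_palette_of_mem_edge c _ ?_⟩
        rcases mem_insert.1 hu with rfl | hu
        · exact Sym2.mem_mk_left _ _
        · rw [mem_singleton.1 hu]
          exact Sym2.mem_mk_right _ _

lemma two_mul_card_compl_paletteFinset_le (hsurj : Function.Surjective c) (v : V) :
    2 * #(paletteFinset c v)ᶜ ≤ ∑ u, #(paletteFinset c u \ paletteFinset c v) := by
  calc 2 * #(paletteFinset c v)ᶜ = ∑ _i ∈ (paletteFinset c v)ᶜ, 2 := by
        rw [sum_const, smul_eq_mul, mul_comm]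
    _ ≤ ∑ i ∈ (paletteFinset c v)ᶜ, #{u | i ∈ paletteFinset c u} :=
        sum_le_sum fun i _ => by
          obtain ⟨e, rfl⟩ := hsurj i
          exact two_le_card_filter_mem_paletteFinset e
    _ = ∑ u, #{i ∈ (paletteFinset c v)ᶜ | i ∈ paletteFinset c u} := by
        simp only [card_filter]
        exact sum_comm
    _ = ∑ u, #(paletteFinset c u \ paletteFinset c v) := by
        congr! 2 with u
        ext i
        simp [and_comm]

lemma TwoValid.sum_card_paletteFinset_sdiff_add_card_adj_le [DecidableEq V]
    [DecidableRel G.Adj] (h2 : TwoValid c) (v : V) :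
    ∑ u, #(paletteFinset c u \ paletteFinset c v) + #{u | G.Adj v u} + 2 ≤
      2 * Fintype.card V := by
  have := sum_le_sum fun u (_ : u ∈ univ) => h2.card_paletteFinset_sdiff_add_le u v
  simp only [sum_add_distrib, sum_ite_eq', mem_univ, if_true, sum_const, card_univ,
    smul_eq_mul] at this
  rw [card_filter]
  omega

theorem TwoValid.ncard_neighborSet_add_two_mul_le (h2 : TwoValid c)
    (hsurj : Function.Surjective c) (v : V) :
    (G.neighborSet v).ncard + 2 * k ≤ 2 * Fintype.card V + 2 := by
  classical
  have hdeg : (G.neighborSet v).ncard = #{u | G.Adj v u} := by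
    rw [← Set.ncard_coe_finset]
    congr 1
    ext u
    simp
  have hlower := two_mul_card_compl_paletteFinset_le hsurj v
  have hupper := h2.sum_card_paletteFinset_sdiff_add_card_adj_le v
  have hcompl := card_compl_add_card (paletteFinset c v)
  have hpal := h2.card_paletteFinset_le v
  rw [Fintype.card_fin] at hcompl
  omega

end Palette

/-- If a graph `G` on `n` vertices admits a `2`-valid edge coloring using at least `n - k`
colors, then the maximum degree of `G` is at most `3k + 6`. -/
theorem stmt9 {V : Type*} [Fintype V] (G : SimpleGraph V) (k k' : ℕ)
    (hk' : Fintype.card V - k ≤ k')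
    (c : G.edgeSet → Fin k') (hsurj : Function.Surjective c) (h2 : TwoValid c) :
    ∀ v : V, (G.neighborSet v).ncard ≤ 3 * k + 6 := by
  intro v
  have := h2.ncard_neighborSet_add_two_mul_le hsurj v
  omega
end

section
/- Let G = (V,E) be a finite simple graph on n vertices, let u and v be adjacent vertices of G with deg(u) = deg(v) = 2, let v' be the neighbor of v other than u, and assume v' ≠ u and v' is not adjacent to u. Let H be the graph on vertex set V∖{v} whose edge set is (E with the edges uv and vv' removed) together with the new edge uv'. Then G has a 2-valid edge coloring using at least n−k colors if and only if H has a 2-valid edge coloring using at least (n−1)−k colors. -/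
open Function

section Palette

variable {V W : Type*} {G : SimpleGraph V} {H : SimpleGraph W} {k m : ℕ}

theorem palette_comp (c : G.edgeSet → Fin k) (f : Fin k → Fin m) (w : V) :
    palette (f ∘ c) w = f '' palette c w := by
  ext i
  constructor
  · rintro ⟨e, he, rfl⟩
    exact ⟨c e, ⟨e, he, rfl⟩, rfl⟩
  · rintro ⟨_, ⟨e, he, rfl⟩, rfl⟩
    exact ⟨e, he, rfl⟩

theorem ncard_palette_le_of_forall_mem {c : G.edgeSet → Fin k} {c' : H.edgeSet → Fin m}
    (f : Fin m → Fin k) {w : V} {w' : W}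
    (h : ∀ e : G.edgeSet, w ∈ (e : Sym2 V) →
      ∃ e' : H.edgeSet, w' ∈ (e' : Sym2 W) ∧ c e = f (c' e')) :
    (palette c w).ncard ≤ (palette c' w').ncard := by
  refine (Set.ncard_le_ncard (t := f '' palette c' w') ?_).trans Set.ncard_image_le
  rintro _ ⟨e, he, rfl⟩
  obtain ⟨e', he', hce⟩ := h e he
  exact ⟨c' e', ⟨e', he', rfl⟩, hce.symm⟩

theorem ncard_palette_le_two {c : G.edgeSet → Fin k} {w : V} (a b : Fin k)
    (h : ∀ e : G.edgeSet, w ∈ (e : Sym2 V) → c e = a ∨ c e = b) :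
    (palette c w).ncard ≤ 2 :=
  calc (palette c w).ncard ≤ ({a, b} : Set (Fin k)).ncard :=
        Set.ncard_le_ncard (by rintro _ ⟨e, he, rfl⟩; exact h e he)
    _ ≤ ({b} : Set (Fin k)).ncard + 1 := Set.ncard_insert_le _ _
    _ = 2 := by rw [Set.ncard_singleton]

theorem TwoValid.exists_surjective {c : G.edgeSet → Fin k} (hc : TwoValid c) :
    ∃ c' : G.edgeSet → Fin (Set.range c).ncard, Surjective c' ∧ TwoValid c' := by
  let E : Set.range c ≃ Fin (Set.range c).ncard := Finite.equivFin _
  refine ⟨E ∘ Set.rangeFactorization c, E.surjective.comp Set.rangeFactorization_surjective,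
    fun w => ?_⟩
  have hfactor : c = (Subtype.val ∘ E.symm) ∘ E ∘ Set.rangeFactorization c := by
    funext e
    simp [Set.rangeFactorization]
  have hw := hc w
  rwa [hfactor, palette_comp,
    Set.ncard_image_of_injective _ (Subtype.val_injective.comp E.symm.injective)] at hw

end Palette

theorem Set.exists_eq_pair_of_ncard_eq_two {α : Type*} {s : Set α} {a : α} (hs : s.ncard = 2)
    (ha : a ∈ s) : ∃ b, s = {a, b} := by
  obtain ⟨x, y, -, rfl⟩ := Set.ncard_eq_two.mp hs
  rcases ha with rfl | rfl
  · exact ⟨y, rfl⟩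
  · exact ⟨x, Set.pair_comm _ _⟩

theorem SimpleGraph.eq_or_eq_of_neighborSet_eq_pair {V : Type*} {G : SimpleGraph V} {v a b : V}
    (hN : G.neighborSet v = {a, b}) {e : Sym2 V} (he : e ∈ G.edgeSet) (hv : v ∈ e) :
    e = s(v, a) ∨ e = s(v, b) := by
  have hother : Sym2.Mem.other hv ∈ G.neighborSet v := by
    rw [SimpleGraph.mem_neighborSet, ← SimpleGraph.mem_edgeSet, Sym2.other_spec hv]
    exact he
  rw [hN] at hother
  rcases hother with h | h
  · exact Or.inl (by rw [← Sym2.other_spec hv, h])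
  · exact Or.inr (by rw [← Sym2.other_spec hv, Set.mem_singleton_iff.mp h])

structure DegTwoContraction {V : Type*} (G : SimpleGraph V) (u v v' : V)
    (H : SimpleGraph {x : V // x ≠ v}) : Prop where
  adj_uv : G.Adj u v
  adj_vv' : G.Adj v v'
  ncard_neighborSet_u : (G.neighborSet u).ncard = 2
  ncard_neighborSet_v : (G.neighborSet v).ncard = 2
  ne : v' ≠ u
  not_adj : ¬G.Adj u v'
  adj_iff : ∀ x y : {x : V // x ≠ v}, H.Adj x y ↔
    (G.Adj x y ∨ ((x : V) = u ∧ (y : V) = v') ∨ ((x : V) = v' ∧ (y : V) = u))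

namespace DegTwoContraction

variable {V : Type*} {G : SimpleGraph V} {u v v' : V} {H : SimpleGraph {x : V // x ≠ v}}

theorem neighborSet_v (R : DegTwoContraction G u v v' H) : G.neighborSet v = {u, v'} := by
  obtain ⟨w, hw⟩ := Set.exists_eq_pair_of_ncard_eq_two R.ncard_neighborSet_v R.adj_uv.symm
  have hv' : v' ∈ G.neighborSet v := R.adj_vv'
  rw [hw] at hv' ⊢
  rcases hv' with h | rfl
  · exact absurd h R.ne
  · rfl

theorem edges_at_v (R : DegTwoContraction G u v v' H) (e : G.edgeSet) (hv : v ∈ (e : Sym2 V)) :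
    (e : Sym2 V) = s(u, v) ∨ (e : Sym2 V) = s(v, v') := by
  rcases SimpleGraph.eq_or_eq_of_neighborSet_eq_pair R.neighborSet_v e.2 hv with h | h
  · exact Or.inl (h.trans Sym2.eq_swap)
  · exact Or.inr h

theorem exists_edges_at_u (R : DegTwoContraction G u v v' H) :
    ∃ u', G.Adj u u' ∧
      ∀ e : G.edgeSet, u ∈ (e : Sym2 V) → (e : Sym2 V) = s(u, v) ∨ (e : Sym2 V) = s(u, u') := by
  obtain ⟨u', hN⟩ := Set.exists_eq_pair_of_ncard_eq_two R.ncard_neighborSet_u R.adj_uv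
  refine ⟨u', show u' ∈ G.neighborSet u by rw [hN]; exact Or.inr rfl, fun e hu => ?_⟩
  exact SimpleGraph.eq_or_eq_of_neighborSet_eq_pair hN e.2 hu

open Classical in
noncomputable def contract (R : DegTwoContraction G u v v' H) (x : V) : {x : V // x ≠ v} :=
  if h : x = v then ⟨u, R.adj_uv.ne⟩ else ⟨x, h⟩

theorem contract_self (R : DegTwoContraction G u v v' H) : R.contract v = ⟨u, R.adj_uv.ne⟩ :=
  dif_pos rfl

theorem contract_of_ne (R : DegTwoContraction G u v v' H) {x : V} (hx : x ≠ v) :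
    R.contract x = ⟨x, hx⟩ :=
  dif_neg hx

theorem adj_contract (R : DegTwoContraction G u v v' H) {x y : V} (hxy : G.Adj x y)
    (hne : s(x, y) ≠ s(u, v)) : H.Adj (R.contract x) (R.contract y) := by
  rw [R.adj_iff]
  have hv' : v' ≠ v := R.adj_vv'.ne'
  by_cases hx : x = v
  · rw [hx] at hxy hne ⊢
    rcases R.edges_at_v ⟨_, hxy⟩ (Sym2.mem_mk_left _ _) with h | h
    · exact absurd h hne
    · obtain rfl := Sym2.congr_right.mp h
      simp [R.contract_self, R.contract_of_ne hv']
  by_cases hy : y = v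
  · rw [hy] at hxy hne ⊢
    rcases R.edges_at_v ⟨_, hxy⟩ (Sym2.mem_mk_right _ _) with h | h
    · exact absurd h hne
    · obtain rfl := Sym2.congr_left.mp (h.trans Sym2.eq_swap)
      simp [R.contract_self, R.contract_of_ne hv']
  · simp [R.contract_of_ne hx, R.contract_of_ne hy, hxy]

noncomputable def contractEdge (R : DegTwoContraction G u v v' H) (e : G.edgeSet)
    (he : (e : Sym2 V) ≠ s(u, v)) : H.edgeSet :=
  ⟨(e : Sym2 V).map R.contract, by
    obtain ⟨e, hG⟩ := e
    induction e using Sym2.ind with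
    | _ x y => exact R.adj_contract hG he⟩

theorem mem_contractEdge_of_mem (R : DegTwoContraction G u v v' H) {e : G.edgeSet}
    {he : (e : Sym2 V) ≠ s(u, v)} {x : V} (hx : x ∈ (e : Sym2 V)) (hxv : x ≠ v) :
    ⟨x, hxv⟩ ∈ (R.contractEdge e he : Sym2 {x : V // x ≠ v}) :=
  Sym2.mem_map.mpr ⟨x, hx, R.contract_of_ne hxv⟩

theorem mem_or_of_mem_contractEdge (R : DegTwoContraction G u v v' H) {e : G.edgeSet}
    {he : (e : Sym2 V) ≠ s(u, v)} {w : {x : V // x ≠ v}}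
    (hw : w ∈ (R.contractEdge e he : Sym2 {x : V // x ≠ v})) :
    (w : V) ∈ (e : Sym2 V) ∨ ((w : V) = u ∧ v ∈ (e : Sym2 V)) := by
  obtain ⟨x, hx, rfl⟩ := Sym2.mem_map.mp hw
  by_cases hxv : x = v
  · rw [hxv] at hx ⊢
    exact Or.inr ⟨by rw [R.contract_self], hx⟩
  · rw [R.contract_of_ne hxv]
    exact Or.inl hx

theorem exists_contractEdge_eq (R : DegTwoContraction G u v v' H) (f : H.edgeSet) :
    ∃ e he, R.contractEdge e he = f := by
  obtain ⟨f, hf⟩ := f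
  induction f using Sym2.ind with
  | _ x y =>
    have huv : u ≠ v := R.adj_uv.ne
    rcases (R.adj_iff x y).mp hf with h | ⟨hx, hy⟩ | ⟨hx, hy⟩
    · refine ⟨⟨s(x, y), h⟩, fun h' => ?_, ?_⟩
      · rcases Sym2.eq_iff.mp h' with ⟨-, h'⟩ | ⟨h', -⟩
        exacts [y.2 h', x.2 h']
      · simp [contractEdge, R.contract_of_ne x.2, R.contract_of_ne y.2]
    · refine ⟨⟨s(v, v'), R.adj_vv'⟩, fun h' => ?_, ?_⟩
      · rcases Sym2.eq_iff.mp h' with ⟨h', -⟩ | ⟨-, h'⟩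
        exacts [huv h'.symm, R.ne h']
      · obtain rfl : x = ⟨u, huv⟩ := Subtype.ext hx
        obtain rfl : y = ⟨v', R.adj_vv'.ne'⟩ := Subtype.ext hy
        simp [contractEdge, R.contract_self, R.contract_of_ne R.adj_vv'.ne']
    · refine ⟨⟨s(v', v), R.adj_vv'.symm⟩, fun h' => ?_, ?_⟩
      · rcases Sym2.eq_iff.mp h' with ⟨h', -⟩ | ⟨-, h'⟩
        exacts [R.ne h', huv h'.symm]
      · obtain rfl : x = ⟨v', R.adj_vv'.ne'⟩ := Subtype.ext hx
        obtain rfl : y = ⟨u, huv⟩ := Subtype.ext hy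
        simp [contractEdge, R.contract_self, R.contract_of_ne R.adj_vv'.ne']

open Classical in
noncomputable def expandEdge (R : DegTwoContraction G u v v' H) (f : H.edgeSet) : G.edgeSet :=
  if h : (f : Sym2 {x : V // x ≠ v}).map Subtype.val ∈ G.edgeSet then ⟨_, h⟩
  else ⟨s(v, v'), R.adj_vv'⟩

theorem expandEdge_contractEdge (R : DegTwoContraction G u v v' H) (e : G.edgeSet)
    (he : (e : Sym2 V) ≠ s(u, v)) : R.expandEdge (R.contractEdge e he) = e := by
  have hmap : ((R.contractEdge e he : Sym2 {x : V // x ≠ v})).map Subtype.val =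
      (e : Sym2 V).map (fun x => (R.contract x : V)) := Sym2.map_map _
  by_cases hv : v ∈ (e : Sym2 V)
  · have hvv' := (R.edges_at_v e hv).resolve_left he
    have hnot : ¬((R.contractEdge e he : Sym2 {x : V // x ≠ v})).map Subtype.val ∈ G.edgeSet := by
      rw [hmap, hvv']
      simpa [R.contract_self, R.contract_of_ne R.adj_vv'.ne'] using R.not_adj
    rw [expandEdge, dif_neg hnot]
    exact Subtype.ext hvv'.symm
  · have hid : (e : Sym2 V).map (fun x => (R.contract x : V)) = e := by
      refine (Sym2.map_congr fun x hx => ?_).trans (congrFun Sym2.map_id _)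
      rw [R.contract_of_ne (fun h => hv (h ▸ hx)), id]
    have hmem := hmap.trans hid
    rw [expandEdge, dif_pos (hmem ▸ e.2)]
    exact Subtype.ext hmem

variable {k m : ℕ}

theorem twoValid_comp_expandEdge (R : DegTwoContraction G u v v' H) {c : G.edgeSet → Fin k}
    (hc : TwoValid c) : TwoValid (c ∘ R.expandEdge) := by
  intro w
  by_cases hwu : (w : V) = u
  · obtain ⟨u', hu', hinc⟩ := R.exists_edges_at_u
    refine ncard_palette_le_two (c ⟨s(u, u'), hu'⟩) (c ⟨s(v, v'), R.adj_vv'⟩) fun f hf => ?_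
    obtain ⟨e, he, rfl⟩ := R.exists_contractEdge_eq f
    rw [comp_apply, R.expandEdge_contractEdge]
    rcases R.mem_or_of_mem_contractEdge hf with hu | ⟨-, hv⟩
    · rw [hwu] at hu
      exact Or.inl (congrArg c (Subtype.ext ((hinc e hu).resolve_left he)))
    · exact Or.inr (congrArg c (Subtype.ext ((R.edges_at_v e hv).resolve_left he)))
  · refine (ncard_palette_le_of_forall_mem id (w' := (w : V)) fun f hf => ?_).trans (hc w)
    obtain ⟨e, he, rfl⟩ := R.exists_contractEdge_eq f
    refine ⟨e, (R.mem_or_of_mem_contractEdge hf).resolve_right fun h => hwu h.1, ?_⟩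
    rw [comp_apply, R.expandEdge_contractEdge, id]

theorem exists_surjective_twoValid_contracted (R : DegTwoContraction G u v v' H)
    {c : G.edgeSet → Fin k} (hc : Surjective c) (hc2 : TwoValid c) :
    ∃ m, k ≤ m + 1 ∧ ∃ c' : H.edgeSet → Fin m, Surjective c' ∧ TwoValid c' := by
  obtain ⟨c', hc's, hc'2⟩ := (R.twoValid_comp_expandEdge hc2).exists_surjective
  refine ⟨_, ?_, c', hc's, hc'2⟩
  have hrange : Set.range c ⊆ insert (c ⟨s(u, v), R.adj_uv⟩) (Set.range (c ∘ R.expandEdge)) := by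
    rintro _ ⟨e, rfl⟩
    by_cases he : (e : Sym2 V) = s(u, v)
    · exact Or.inl (congrArg c (Subtype.ext he))
    · exact Or.inr ⟨R.contractEdge e he, by rw [comp_apply, R.expandEdge_contractEdge]⟩
  calc k = (Set.range c).ncard := by rw [hc.range_eq, Set.ncard_univ, Nat.card_fin]
    _ ≤ _ := Set.ncard_le_ncard hrange
    _ ≤ _ := Set.ncard_insert_le _ _

open Classical in
noncomputable def extendColoring (R : DegTwoContraction G u v v' H) (c : H.edgeSet → Fin m)
    (e : G.edgeSet) : Fin (m + 1) :=
  if he : (e : Sym2 V) = s(u, v) then Fin.last m else (c (R.contractEdge e he)).castSucc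

theorem surjective_extendColoring (R : DegTwoContraction G u v v' H) {c : H.edgeSet → Fin m}
    (hc : Surjective c) : Surjective (R.extendColoring c) := by
  intro i
  induction i using Fin.lastCases with
  | last => exact ⟨⟨s(u, v), R.adj_uv⟩, dif_pos rfl⟩
  | cast j =>
    obtain ⟨f, rfl⟩ := hc j
    obtain ⟨e, he, rfl⟩ := R.exists_contractEdge_eq f
    exact ⟨e, dif_neg he⟩

theorem twoValid_extendColoring (R : DegTwoContraction G u v v' H) {c : H.edgeSet → Fin m}
    (hc : TwoValid c) : TwoValid (R.extendColoring c) := by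
  intro w
  by_cases hwv : w = v
  · rw [hwv]
    refine ncard_palette_le_two (R.extendColoring c ⟨s(u, v), R.adj_uv⟩)
      (R.extendColoring c ⟨s(v, v'), R.adj_vv'⟩) fun e he => ?_
    exact (R.edges_at_v e he).imp (fun h => congrArg _ (Subtype.ext h))
      (fun h => congrArg _ (Subtype.ext h))
  by_cases hwu : w = u
  · rw [hwu]
    obtain ⟨u', hu', hinc⟩ := R.exists_edges_at_u
    refine ncard_palette_le_two (R.extendColoring c ⟨s(u, v), R.adj_uv⟩)
      (R.extendColoring c ⟨s(u, u'), hu'⟩) fun e he => ?_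
    exact (hinc e he).imp (fun h => congrArg _ (Subtype.ext h))
      (fun h => congrArg _ (Subtype.ext h))
  · refine (ncard_palette_le_of_forall_mem Fin.castSucc (w' := ⟨w, hwv⟩) fun e hw => ?_).trans
      (hc _)
    have he : (e : Sym2 V) ≠ s(u, v) := by
      intro h
      rw [h] at hw
      exact (Sym2.mem_iff.mp hw).elim hwu hwv
    exact ⟨R.contractEdge e he, R.mem_contractEdge_of_mem hw hwv, dif_neg he⟩

end DegTwoContraction

theorem stmt10_general {V : Type*} [Fintype V] (G : SimpleGraph V) (k : ℕ)
    (u v v' : V) (huv : G.Adj u v) (hvv' : G.Adj v v')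
    (hdu : (G.neighborSet u).ncard = 2) (hdv : (G.neighborSet v).ncard = 2)
    (hne : v' ≠ u) (hnadj : ¬ G.Adj u v')
    (H : SimpleGraph {x : V // x ≠ v})
    (hH : ∀ x y : {x : V // x ≠ v}, H.Adj x y ↔
      (G.Adj x y ∨ ((x : V) = u ∧ (y : V) = v') ∨ ((x : V) = v' ∧ (y : V) = u))) :
    (∃ k' : ℕ, Fintype.card V - k ≤ k' ∧
      ∃ c : G.edgeSet → Fin k', Function.Surjective c ∧ TwoValid c) ↔
    (∃ k' : ℕ, Fintype.card V - 1 - k ≤ k' ∧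
      ∃ c : H.edgeSet → Fin k', Function.Surjective c ∧ TwoValid c) := by
  have R : DegTwoContraction G u v v' H := ⟨huv, hvv', hdu, hdv, hne, hnadj, hH⟩
  constructor
  · rintro ⟨k', hk', c, hc, hc2⟩
    obtain ⟨m, hm, c', hc'⟩ := R.exists_surjective_twoValid_contracted hc hc2
    exact ⟨m, by omega, c', hc'⟩
  · rintro ⟨m, hm, c, hc, hc2⟩
    exact ⟨m + 1, by omega, R.extendColoring c, R.surjective_extendColoring hc,
      R.twoValid_extendColoring hc2⟩

/-- Correctness of the reduction rule for adjacent degree-two vertices: with `u, v` adjacent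
vertices of degree two, `v'` the neighbor of `v` other than `u` (with `v'` not adjacent
to `u`), and `H` the graph on `V \ {v}` obtained by deleting `v` (and the edges `uv`, `vv'`)
and adding the edge `uv'`, the graph `G` has a `2`-valid edge coloring using at least
`n - k` colors iff `H` has a `2`-valid edge coloring using at least `(n - 1) - k` colors. -/
theorem stmt10 {V : Type*} [Fintype V] [DecidableEq V] (G : SimpleGraph V) (k : ℕ)
    (u v v' : V) (huv : G.Adj u v) (hvv' : G.Adj v v')
    (hdu : (G.neighborSet u).ncard = 2) (hdv : (G.neighborSet v).ncard = 2)
    (hne : v' ≠ u) (hnadj : ¬ G.Adj u v')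
    (H : SimpleGraph {x : V // x ≠ v})
    (hH : ∀ x y : {x : V // x ≠ v}, H.Adj x y ↔
      (G.Adj x y ∨ ((x : V) = u ∧ (y : V) = v') ∨ ((x : V) = v' ∧ (y : V) = u))) :
    (∃ k' : ℕ, Fintype.card V - k ≤ k' ∧
      ∃ c : G.edgeSet → Fin k', Function.Surjective c ∧ TwoValid c) ↔
    (∃ k' : ℕ, Fintype.card V - 1 - k ≤ k' ∧
      ∃ c : H.edgeSet → Fin k', Function.Surjective c ∧ TwoValid c) :=
  stmt10_general G k u v v' huv hvv' hdu hdv hne hnadj H hH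
end

section
/- Let c be a 2-valid edge coloring of a finite simple graph G, let T be a nonempty set of vertices of G, and let I_T be a set of vertices of G, disjoint from T, each of whose neighborhood in G is exactly T. Then the number of distinct palettes among the vertices of I_T satisfies |{c†(v) : v ∈ I_T}| ≤ max{10, |T|+1}. -/
open Set

namespace Set

variable {α : Type*}

theorem exists_eq_pair_of_mem_of_ncard_le_two {s : Set α} {a : α} (ha : a ∈ s)
    (hs : s.ncard ≤ 2) (hfin : s.Finite := by toFinite_tac) : ∃ b ∈ s, s = {a, b} := by
  by_cases h : s ⊆ {a}
  · exact ⟨a, ha, by simpa using h.antisymm (singleton_subset_iff.2 ha)⟩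
  · obtain ⟨b, hb, hba⟩ := not_subset.1 h
    refine ⟨b, hb, (eq_of_subset_of_ncard_le (pair_subset ha hb) ?_ hfin).symm⟩
    rwa [ncard_pair (Ne.symm hba)]

theorem subsingleton_diff_singleton_of_ncard_le_two {s : Set α} {a : α} (ha : a ∈ s)
    (hs : s.ncard ≤ 2) (hfin : s.Finite := by toFinite_tac) : (s \ {a}).Subsingleton := by
  obtain ⟨b, -, rfl⟩ := exists_eq_pair_of_mem_of_ncard_le_two ha hs hfin
  exact (subsingleton_singleton (a := b)).anti fun x hx => by aesop

theorem ncard_biUnion_le_ncard_of_subsingleton {ι : Type*} {t : Set ι} (ht : t.Finite)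
    {s : ι → Set α} (hs : ∀ i ∈ t, (s i).Subsingleton) : (⋃ i ∈ t, s i).ncard ≤ t.ncard := by
  calc (⋃ i ∈ t, s i).ncard ≤ ∑ i ∈ ht.toFinset, (s i).ncard := by
        simpa using ht.toFinset.set_ncard_biUnion_le s
    _ ≤ ∑ _i ∈ ht.toFinset, 1 :=
        Finset.sum_le_sum fun i hi =>
          have hi : i ∈ t := by simpa using hi
          (ncard_le_one_iff (hs i hi).finite).2 fun ha hb => hs i hi ha hb
    _ = t.ncard := by simp [ncard_eq_toFinset_card t ht]

/-- A nonempty set with at most two elements is the set of members of an unordered pair, and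
a finite set `U` carries `(|U| + 1).choose 2` unordered pairs. -/
theorem ncard_le_choose_of_forall_small_subset {F : Set (Set α)} {U : Set α} (hU : U.Finite)
    (hF : ∀ P ∈ F, P.Nonempty ∧ P.ncard ≤ 2 ∧ P ⊆ U) : F.ncard ≤ (U.ncard + 1).choose 2 := by
  classical
  have hsub : F ⊆ (fun z : Sym2 α => {x | x ∈ z}) '' ↑hU.toFinset.sym2 := by
    intro P hP
    obtain ⟨⟨a, ha⟩, hP2, hPU⟩ := hF P hP
    obtain ⟨b, hb, rfl⟩ := exists_eq_pair_of_mem_of_ncard_le_two ha hP2 (hU.subset hPU)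
    refine ⟨s(a, b), ?_, ?_⟩
    · simpa [Finset.mk_mem_sym2_iff] using pair_subset_iff.1 hPU
    · ext x
      simp
  calc F.ncard ≤ ((fun z : Sym2 α => {x | x ∈ z}) '' ↑hU.toFinset.sym2).ncard :=
        ncard_le_ncard hsub ((Finset.finite_toSet _).image _)
    _ ≤ (↑hU.toFinset.sym2 : Set (Sym2 α)).ncard := ncard_image_le (Finset.finite_toSet _)
    _ = (U.ncard + 1).choose 2 := by
        rw [ncard_coe_finset, Finset.card_sym2, ncard_eq_toFinset_card U hU]

end Set

section Transversals

variable {C : Type*}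

def twoTransversals (S : Set (Set C)) : Set (Set C) :=
  {P | P.ncard ≤ 2 ∧ P ⊆ ⋃₀ S ∧ ∀ A ∈ S, (P ∩ A).Nonempty}

variable [Finite C] {S : Set (Set C)}

theorem ncard_twoTransversals_le_of_forall_subset (hS : S.Nonempty) {U : Set C}
    (hU : U.ncard ≤ 4) (h : ∀ P ∈ twoTransversals S, P ⊆ U) : (twoTransversals S).ncard ≤ 10 := by
  obtain ⟨A, hA⟩ := hS
  calc (twoTransversals S).ncard ≤ (U.ncard + 1).choose 2 :=
        ncard_le_choose_of_forall_small_subset U.toFinite fun P hP =>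
          ⟨(hP.2.2 A hA).mono inter_subset_left, hP.1, h P hP⟩
    _ ≤ (4 + 1).choose 2 := Nat.choose_le_choose 2 (by omega)
    _ = 10 := rfl

theorem ncard_twoTransversals_le_of_disjoint (hS : ∀ A ∈ S, A.ncard ≤ 2) {A B : Set C}
    (hA : A ∈ S) (hB : B ∈ S) (hAB : Disjoint A B) : (twoTransversals S).ncard ≤ 10 := by
  refine ncard_twoTransversals_le_of_forall_subset ⟨A, hA⟩ (U := A ∪ B)
    ((ncard_union_le A B).trans (by linarith [hS A hA, hS B hB])) fun P hP => ?_
  obtain ⟨y, hyP, hyA⟩ := hP.2.2 A hA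
  obtain ⟨z, hzP, hzB⟩ := hP.2.2 B hB
  obtain ⟨x, -, rfl⟩ := exists_eq_pair_of_mem_of_ncard_le_two hyP hP.1
  have hzx : z = x := by
    rcases hzP with rfl | h
    · exact absurd hzB (disjoint_left.1 hAB hyA)
    · exact h
  subst hzx
  exact pair_subset (Or.inl hyA) (Or.inr hzB)

theorem ncard_twoTransversals_le_of_forall_mem (hS : ∀ A ∈ S, A.ncard ≤ 2) (hSne : S.Nonempty)
    {a : C} (ha : ∀ A ∈ S, a ∈ A) : (twoTransversals S).ncard ≤ max 10 (S.ncard + 1) := by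
  set X := ⋃ A ∈ S, A \ {a}
  have hXS : ∀ A ∈ S, (A \ {a}).Subsingleton := fun A hA =>
    subsingleton_diff_singleton_of_ncard_le_two (ha A hA) (hS A hA)
  have hX : X.ncard ≤ S.ncard := ncard_biUnion_le_ncard_of_subsingleton S.toFinite hXS
  have hPX : ∀ P ∈ twoTransversals S, P ⊆ insert a X := by
    intro P hP x hx
    obtain ⟨A, hA, hxA⟩ := hP.2.1 hx
    by_cases hxa : x = a
    · exact Or.inl hxa
    · exact Or.inr (mem_biUnion hA ⟨hxA, hxa⟩)
  by_cases hQ : ∃ Q ∈ twoTransversals S, a ∉ Q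
  · obtain ⟨Q, hQ, haQ⟩ := hQ
    have hXQ : X ⊆ Q := by
      intro x hx
      obtain ⟨A, hA, hxA⟩ := mem_iUnion₂.1 hx
      obtain ⟨y, hyQ, hyA⟩ := hQ.2.2 A hA
      have hya : y ≠ a := fun h => haQ (h ▸ hyQ)
      exact hXS A hA ⟨hyA, hya⟩ hxA ▸ hyQ
    refine le_max_of_le_left (ncard_twoTransversals_le_of_forall_subset hSne (U := insert a Q)
      ((ncard_insert_le a Q).trans (by linarith [hQ.1])) fun P hP => ?_)
    exact (hPX P hP).trans (insert_subset_insert hXQ)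
  · push Not at hQ
    have hsub : twoTransversals S ⊆ (fun x => {a, x}) '' insert a X := by
      intro P hP
      obtain ⟨b, hb, rfl⟩ := exists_eq_pair_of_mem_of_ncard_le_two (hQ P hP) hP.1
      exact ⟨b, hPX _ hP hb, rfl⟩
    calc (twoTransversals S).ncard ≤ ((fun x => {a, x}) '' insert a X).ncard :=
          ncard_le_ncard hsub (toFinite _)
      _ ≤ (insert a X).ncard := ncard_image_le (toFinite _)
      _ ≤ S.ncard + 1 := (ncard_insert_le a X).trans (by omega)
      _ ≤ max 10 (S.ncard + 1) := le_max_right _ _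

/-- A pairwise intersecting family of sets of size at most two without a common element contains
a triangle `{a, b}, {b, c}, {a, c}`, and a set of size at most two meeting all three sides lies
in `{a, b, c}`. -/
theorem ncard_twoTransversals_le_of_pairwise_inter (hS : ∀ A ∈ S, A.ncard ≤ 2)
    (hSne : S.Nonempty) (hmeet : ∀ A ∈ S, ∀ B ∈ S, (A ∩ B).Nonempty)
    (hno : ∀ a, ∃ A ∈ S, a ∉ A) : (twoTransversals S).ncard ≤ 10 := by
  obtain ⟨A, hA⟩ := hSne
  obtain ⟨a, haA, -⟩ := hmeet A hA A hA
  obtain ⟨b, -, rfl⟩ := exists_eq_pair_of_mem_of_ncard_le_two haA (hS A hA)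
  obtain ⟨B, hB, haB⟩ := hno a
  have hbB : b ∈ B := by
    obtain ⟨z, hzA, hzB⟩ := hmeet _ hA B hB
    rcases hzA with rfl | rfl
    exacts [absurd hzB haB, hzB]
  obtain ⟨c, -, rfl⟩ := exists_eq_pair_of_mem_of_ncard_le_two hbB (hS B hB)
  obtain ⟨D, hD, hbD⟩ := hno b
  have haD : a ∈ D := by
    obtain ⟨z, hzA, hzD⟩ := hmeet _ hA D hD
    rcases hzA with rfl | rfl
    exacts [hzD, absurd hzD hbD]
  have hcD : c ∈ D := by
    obtain ⟨z, hzB, hzD⟩ := hmeet _ hB D hD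
    rcases hzB with rfl | rfl
    exacts [absurd hzD hbD, hzD]
  obtain ⟨d, -, rfl⟩ := exists_eq_pair_of_mem_of_ncard_le_two haD (hS D hD)
  refine ncard_twoTransversals_le_of_forall_subset ⟨_, hA⟩ (U := {a, b, c})
    ((ncard_insert_le _ _).trans (by linarith [ncard_insert_le b {c}, ncard_singleton c]))
    fun P hP x hxP => ?_
  by_contra hx
  have hP1 := subsingleton_diff_singleton_of_ncard_le_two hxP hP.1
  obtain ⟨y, hyP, hyA⟩ := hP.2.2 _ hA
  obtain ⟨z, hzP, hzB⟩ := hP.2.2 _ hB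
  obtain ⟨w, hwP, hwD⟩ := hP.2.2 _ hD
  have hyz : y = z := hP1 ⟨hyP, by aesop⟩ ⟨hzP, by aesop⟩
  have hyw : y = w := hP1 ⟨hyP, by aesop⟩ ⟨hwP, by aesop⟩
  aesop

theorem ncard_twoTransversals_le (hS : ∀ A ∈ S, A.ncard ≤ 2) :
    (twoTransversals S).ncard ≤ max 10 (S.ncard + 1) := by
  rcases S.eq_empty_or_nonempty with rfl | hSne
  · have h : twoTransversals (∅ : Set (Set C)) ⊆ {∅} := fun P hP => by
      simpa using hP.2.1
    exact (ncard_le_ncard h).trans (by simp)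
  by_cases hcommon : ∃ a, ∀ A ∈ S, a ∈ A
  · obtain ⟨a, ha⟩ := hcommon
    exact ncard_twoTransversals_le_of_forall_mem hS hSne ha
  by_cases hdisj : ∃ A ∈ S, ∃ B ∈ S, Disjoint A B
  · obtain ⟨A, hA, B, hB, hAB⟩ := hdisj
    exact le_max_of_le_left (ncard_twoTransversals_le_of_disjoint hS hA hB hAB)
  push Not at hcommon hdisj
  exact le_max_of_le_left (ncard_twoTransversals_le_of_pairwise_inter hS hSne
    (fun A hA B hB => not_disjoint_iff_nonempty_inter.1 (hdisj A hA B hB)) hcommon)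

end Transversals

section Palette

variable {V : Type*} {G : SimpleGraph V} {k : ℕ} (c : G.edgeSet → Fin k)

theorem palette_inter_nonempty_of_adj {v w : V} (h : G.Adj v w) :
    (palette c v ∩ palette c w).Nonempty :=
  ⟨c ⟨s(v, w), h⟩, ⟨_, Sym2.mem_mk_left v w, rfl⟩, ⟨_, Sym2.mem_mk_right v w, rfl⟩⟩

theorem exists_adj_mem_palette_of_mem_palette {v : V} {i : Fin k} (hi : i ∈ palette c v) :
    ∃ w, G.Adj v w ∧ i ∈ palette c w := by
  obtain ⟨e, hve, rfl⟩ := hi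
  obtain ⟨w, hw⟩ := Sym2.mem_iff_exists.1 hve
  refine ⟨w, ?_, e, hw ▸ Sym2.mem_mk_right v w, rfl⟩
  simpa [hw] using e.2

theorem palette_mem_twoTransversals (h2 : TwoValid c) {v : V} {T : Set V}
    (hv : G.neighborSet v = T) : palette c v ∈ twoTransversals (palette c '' T) := by
  refine ⟨h2 v, fun i hi => ?_, ?_⟩
  · obtain ⟨w, hvw, hiw⟩ := exists_adj_mem_palette_of_mem_palette c hi
    exact ⟨palette c w, mem_image_of_mem _ (hv ▸ hvw), hiw⟩
  · rintro _ ⟨t, ht, rfl⟩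
    exact palette_inter_nonempty_of_adj c (show t ∈ G.neighborSet v from hv ▸ ht)

end Palette

theorem stmt12_general {V : Type*} [Fintype V] (G : SimpleGraph V) (k : ℕ)
    (c : G.edgeSet → Fin k) (h2 : TwoValid c)
    (T I : Set V) (hnbr : ∀ v ∈ I, G.neighborSet v = T) :
    ((fun v => palette c v) '' I).ncard ≤ max 10 (T.ncard + 1) := by
  calc ((fun v => palette c v) '' I).ncard ≤ (twoTransversals (palette c '' T)).ncard :=
        ncard_le_ncard (image_subset_iff.2 fun v hv => palette_mem_twoTransversals c h2 (hnbr v hv))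
          (toFinite _)
    _ ≤ max 10 ((palette c '' T).ncard + 1) :=
        ncard_twoTransversals_le (forall_mem_image.2 fun t _ => h2 t)
    _ ≤ max 10 (T.ncard + 1) := by
        gcongr
        exact ncard_image_le T.toFinite

/-- If `c` is a `2`-valid edge coloring of `G`, `T` a nonempty vertex set and `I` a vertex set
disjoint from `T` all of whose members have neighborhood exactly `T`, then the number of
distinct palettes of vertices of `I` is at most `max 10 (|T| + 1)`. -/
theorem stmt12 {V : Type*} [Fintype V] (G : SimpleGraph V) (k : ℕ)
    (c : G.edgeSet → Fin k) (hsurj : Function.Surjective c) (h2 : TwoValid c)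
    (T I : Set V) (hTne : T.Nonempty) (hdisj : Disjoint I T)
    (hnbr : ∀ v ∈ I, G.neighborSet v = T) :
    ((fun v => palette c v) '' I).ncard ≤ max 10 (T.ncard + 1) :=
  stmt12_general G k c h2 T I hnbr
end

section
/- Let F be a finite family of m finite sets, each of cardinality at most 2, such that F contains no three pairwise disjoint members. Then the union of all sets in F has cardinality at most m + 2. -/
/-!
Induct on `F`. If some member `A` has at most one element outside the union of the other
members, deleting `A` loses one member and at most one point of the union, so the bound for
`F.erase A` gives the bound for `F`. Otherwise every member has two points covered by no other
member; having at most two elements, each member is then disjoint from all the others. So the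
members are pairwise disjoint, there are at most two of them, and the union has at most
`2 * F.card ≤ F.card + 2` elements.
-/

open Finset

section

variable {α : Type*}

def NoThreePairwiseDisjoint (F : Finset (Finset α)) : Prop :=
  ¬ ∃ A ∈ F, ∃ B ∈ F, ∃ C ∈ F, A ≠ B ∧ A ≠ C ∧ B ≠ C ∧
    Disjoint A B ∧ Disjoint A C ∧ Disjoint B C

theorem NoThreePairwiseDisjoint.mono {F G : Finset (Finset α)} (hGF : G ⊆ F)
    (hF : NoThreePairwiseDisjoint F) : NoThreePairwiseDisjoint G :=
  fun ⟨A, hA, B, hB, C, hC, h⟩ => hF ⟨A, hGF hA, B, hGF hB, C, hGF hC, h⟩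

theorem NoThreePairwiseDisjoint.card_le_two {F : Finset (Finset α)}
    (hF : NoThreePairwiseDisjoint F) (hd : (F : Set (Finset α)).PairwiseDisjoint id) :
    F.card ≤ 2 := by
  by_contra! h
  obtain ⟨A, hA, B, hB, C, hC, hAB, hAC, hBC⟩ := two_lt_card.mp h
  exact hF ⟨A, hA, B, hB, C, hC, hAB, hAC, hBC, hd hA hB hAB, hd hA hC hAC, hd hB hC hBC⟩

variable [DecidableEq α]

theorem Finset.card_sup_id_le_card_mul {F : Finset (Finset α)} {k : ℕ}
    (h : ∀ A ∈ F, A.card ≤ k) : (F.sup id).card ≤ F.card * k := by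
  rw [sup_eq_biUnion]
  exact card_biUnion_le_card_mul F id k h

theorem Finset.sup_id_eq_union_sup_id_erase {F : Finset (Finset α)} {A : Finset α}
    (hA : A ∈ F) : F.sup id = A ∪ (F.erase A).sup id := by
  conv_lhs => rw [← insert_erase hA]
  rw [sup_insert]
  rfl

theorem Finset.pairwiseDisjoint_of_disjoint_sup_id_erase {F : Finset (Finset α)}
    (h : ∀ A ∈ F, Disjoint A ((F.erase A).sup id)) : (F : Set (Finset α)).PairwiseDisjoint id :=
  fun A hA _ hB hAB => (h A hA).mono_right (le_sup (f := id) (mem_erase.mpr ⟨hAB.symm, hB⟩))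

theorem Finset.disjoint_of_card_le_card_sdiff {A S : Finset α} (h : A.card ≤ (A \ S).card) :
    Disjoint A S :=
  sdiff_eq_self_iff_disjoint.mp (eq_of_subset_of_card_le sdiff_subset h)

end

/-- If `F` is a finite family of `m` finite sets, each of cardinality at most `2`, with no
three pairwise disjoint members, then the union of all sets of `F` has at most `m + 2`
elements. -/
theorem stmt13 {α : Type*} [DecidableEq α] (F : Finset (Finset α))
    (hcard : ∀ A ∈ F, A.card ≤ 2)
    (hno3 : ¬ ∃ A ∈ F, ∃ B ∈ F, ∃ C ∈ F, A ≠ B ∧ A ≠ C ∧ B ≠ C ∧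
      Disjoint A B ∧ Disjoint A C ∧ Disjoint B C) :
    (F.sup id).card ≤ F.card + 2 := by
  induction F using Finset.strongInduction with
  | H F ih =>
  by_cases hsmall : ∃ A ∈ F, (A \ (F.erase A).sup id).card ≤ 1
  · obtain ⟨A, hA, hA1⟩ := hsmall
    have hrest := ih (F.erase A) (erase_ssubset hA) (fun B hB => hcard B (mem_of_mem_erase hB))
      (NoThreePairwiseDisjoint.mono (erase_subset A F) hno3)
    have hunion := card_sdiff_add_card A ((F.erase A).sup id)
    have herase := card_erase_add_one hA
    rw [sup_id_eq_union_sup_id_erase hA]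
    omega
  · push Not at hsmall
    have hd := pairwiseDisjoint_of_disjoint_sup_id_erase fun A hA =>
      disjoint_of_card_le_card_sdiff ((hcard A hA).trans (hsmall A hA))
    have hsup := card_sup_id_le_card_mul hcard
    have hF := NoThreePairwiseDisjoint.card_le_two hno3 hd
    omega
end

section
/- Let G be a finite simple graph, k ≥ 1, S a vertex cover of G, and T ⊆ S. Let I_T = {v ∈ V(G)∖S : N_G(v) = T} and r = max{10, |T|+1}. Suppose |I_T| > r, and let H be the induced subgraph of G obtained by deleting all but r of the vertices of I_T. Then G has a 2-valid edge coloring with exactly k colors if and only if H has a 2-valid edge coloring with exactly k colors. -/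
namespace Set

theorem exists_forall_eq_or_eq_of_ncard_range_le_two {ι α : Type*} {g : ι → α}
    (hfin : (range g).Finite) (h : (range g).ncard ≤ 2) (i₀ : ι) :
    ∃ i₁, ∀ i, g i = g i₀ ∨ g i = g i₁ := by
  by_contra! hcon
  obtain ⟨i₁, -, h₁⟩ := hcon i₀
  obtain ⟨i₂, h₂₀, h₂₁⟩ := hcon i₁
  have : 2 < (range g).ncard := (two_lt_ncard hfin).2
    ⟨g i₀, mem_range_self _, g i₁, mem_range_self _, g i₂, mem_range_self _,
      Ne.symm h₁, Ne.symm h₂₀, Ne.symm h₂₁⟩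
  omega

theorem Finite.exists_mapsTo_surjOn_of_encard_le {α β : Type*} {s : Set α} {t : Set β}
    (hs : s.Finite) (hne : s.Nonempty) (hle : s.encard ≤ t.encard) :
    ∃ f : β → α, MapsTo f t s ∧ SurjOn f t s := by
  have : Nonempty β := (encard_pos.1 ((encard_pos.2 hne).trans_le hle)).to_subtype.map (↑)
  have : Nonempty s := hne.to_subtype
  obtain ⟨g, hgt, hg⟩ := hs.exists_injOn_of_encard_le hle
  refine ⟨fun b => (Function.invFun (s.domRestrict g) b : s), fun b _ => Subtype.prop _,
    fun a ha => ⟨g a, hgt ha, ?_⟩⟩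
  exact congrArg Subtype.val (Function.leftInverse_invFun (injOn_iff_injective.1 hg) ⟨a, ha⟩)

end Set

section Pullback

variable {V U : Type*} {G : SimpleGraph V} {H : SimpleGraph U} {k : ℕ}

theorem palette_comp_mapEdgeSet_subset (ψ : G →g H) (c : H.edgeSet → Fin k) (v : V) :
    palette (c ∘ ψ.mapEdgeSet) v ⊆ palette c (ψ v) := by
  rintro i ⟨e, hve, rfl⟩
  exact ⟨ψ.mapEdgeSet e, Sym2.mem_map.2 ⟨v, hve, rfl⟩, rfl⟩

theorem TwoValid.comp_mapEdgeSet {c : H.edgeSet → Fin k} (hc : TwoValid c) (ψ : G →g H) :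
    TwoValid (c ∘ ψ.mapEdgeSet) := fun v =>
  (Set.ncard_le_ncard (palette_comp_mapEdgeSet_subset ψ c v) (Set.toFinite _)).trans (hc (ψ v))

end Pullback

namespace SimpleGraph

variable {V U : Type*} {G : SimpleGraph V} {H : SimpleGraph U}

theorem Hom.mapEdgeSet_surjective_of_leftInverse {ψ : G →g H} {ι : H →g G}
    (h : Function.LeftInverse ψ ι) : Function.Surjective ψ.mapEdgeSet := fun e =>
  ⟨ι.mapEdgeSet e, Subtype.ext <| by
    rw [Hom.mapEdgeSet_coe, Hom.mapEdgeSet_coe, Sym2.map_map, h.comp_eq_id, Sym2.map_id, id]⟩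

def Hom.codRestrictInduce (ψ : G →g H) {s : Set U} (h : ∀ v, ψ v ∈ s) : G →g H.induce s where
  toFun v := ⟨ψ v, h v⟩
  map_rel' hab := ψ.map_adj hab

def IsIndepSet.redirect {A : Set V} [∀ v, Decidable (v ∈ A)] (hA : G.IsIndepSet A) (f : V → V)
    (hf : ∀ a ∈ A, G.neighborSet a ⊆ G.neighborSet (f a)) : G →g G where
  toFun := A.piecewise f id
  map_rel' {a b} hab := by
    by_cases ha : a ∈ A <;> by_cases hb : b ∈ A
    · exact absurd hab (hA ha hb (G.ne_of_adj hab))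
    · simpa [ha, hb] using hf a ha hab
    · simpa [ha, hb, G.adj_comm] using hf b hb hab.symm
    · simpa [ha, hb] using hab

theorem IsIndepSet.redirect_apply {A : Set V} [∀ v, Decidable (v ∈ A)] (hA : G.IsIndepSet A)
    (f : V → V) (hf : ∀ a ∈ A, G.neighborSet a ⊆ G.neighborSet (f a)) (v : V) :
    hA.redirect f hf v = A.piecewise f id v := rfl

variable {k : ℕ}

def HasTwoValidColoring (G : SimpleGraph V) (k : ℕ) : Prop :=
  ∃ c : G.edgeSet → Fin k, Function.Surjective c ∧ TwoValid c

theorem HasTwoValidColoring.of_induce_compl {D : Set V} {w₀ : V} (hD : G.IsIndepSet D)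
    (hw₀ : w₀ ∉ D) (hN : ∀ a ∈ D, G.neighborSet a ⊆ G.neighborSet w₀)
    (h : (G.induce Dᶜ).HasTwoValidColoring k) : G.HasTwoValidColoring k := by
  classical
  obtain ⟨c, hsurj, hc⟩ := h
  let ψ : G →g G.induce Dᶜ := (hD.redirect (fun _ => w₀) hN).codRestrictInduce fun v => by
    by_cases hv : v ∈ D <;> simp [IsIndepSet.redirect_apply, hv, hw₀]
  have hψ : Function.LeftInverse ψ (Embedding.induce (G := G) Dᶜ).toHom := fun v =>
    Subtype.ext (Set.piecewise_eq_of_notMem D (fun _ => w₀) id v.2)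
  exact ⟨c ∘ ψ.mapEdgeSet, hsurj.comp (Hom.mapEdgeSet_surjective_of_leftInverse hψ),
    hc.comp_mapEdgeSet ψ⟩

section Twins

variable {I T : Set V}

theorem isIndepSet_of_forall_neighborSet_eq (hN : ∀ v ∈ I, G.neighborSet v = T)
    (hIT : Disjoint I T) : G.IsIndepSet I := fun a ha _ hb _ hab =>
  Set.disjoint_left.1 hIT hb (hN a ha ▸ hab)

theorem _root_.TwoValid.exists_mapsTo_color_eq {c : G.edgeSet → Fin k} (hc : TwoValid c)
    (hN : ∀ v ∈ I, G.neighborSet v = T) {W : Set V} (hW : W ⊆ I) (hT : T.Finite)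
    (hTW : T.encard < W.encard) :
    ∃ f : V → V, Set.MapsTo f W I ∧ ∀ v ∈ I, ∀ t (h : G.Adj t v),
      ∃ w ∈ W, ∃ h' : G.Adj t (f w), c ⟨s(t, f w), h'⟩ = c ⟨s(t, v), h⟩ := by
  obtain ⟨v₀, hv₀⟩ : I.Nonempty := (Set.encard_pos.1 (pos_of_gt hTW)).mono hW
  have hadj : ∀ v ∈ I, ∀ t ∈ T, G.Adj t v := fun v hv t ht =>
    (show t ∈ G.neighborSet v by rwa [hN v hv]).symm
  have hpair : ∀ t, ∃ u ∈ I, t ∈ T → ∀ v ∈ I, ∀ h : G.Adj t v,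
      ∃ x ∈ ({v₀, u} : Set V), ∃ h', c ⟨s(t, x), h'⟩ = c ⟨s(t, v), h⟩ := by
    intro t
    by_cases ht : t ∈ T
    swap
    · exact ⟨v₀, hv₀, fun h => absurd h ht⟩
    let col : I → Fin k := fun v => c ⟨s(t, v), hadj v v.2 t ht⟩
    have hrange : Set.range col ⊆ palette c t := by
      rintro _ ⟨v, rfl⟩
      exact ⟨_, Sym2.mem_mk_left _ _, rfl⟩
    obtain ⟨u, hu⟩ := Set.exists_forall_eq_or_eq_of_ncard_range_le_two (Set.toFinite _)
      ((Set.ncard_le_ncard hrange (Set.toFinite _)).trans (hc t)) ⟨v₀, hv₀⟩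
    refine ⟨u, u.2, fun _ v hv h => ?_⟩
    rcases hu ⟨v, hv⟩ with hcol | hcol
    · exact ⟨v₀, by simp, _, hcol.symm⟩
    · exact ⟨u, by simp, _, hcol.symm⟩
  choose u huI hu using hpair
  obtain ⟨f, hfA, hfs⟩ := ((hT.image u).insert v₀).exists_mapsTo_surjOn_of_encard_le
    (Set.insert_nonempty _ _) <| calc
      (insert v₀ (u '' T)).encard ≤ T.encard + 1 :=
        (Set.encard_insert_le _ _).trans (add_le_add_left (Set.encard_image_le _ _) _)
      _ ≤ W.encard := Order.add_one_le_of_lt hTW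
  refine ⟨f, hfA.mono_right (Set.insert_subset hv₀ (Set.image_subset_iff.2 fun t _ => huI t)),
    fun v hv t h => ?_⟩
  have ht : t ∈ T := by rw [← hN v hv]; exact h.symm
  obtain ⟨x, hx, h', hcx⟩ := hu t ht v hv h
  obtain ⟨w, hw, rfl⟩ := hfs (show x ∈ insert v₀ (u '' T) by
    rcases hx with rfl | rfl
    exacts [Set.mem_insert _ _, Set.mem_insert_of_mem _ ⟨t, ht, rfl⟩])
  exact ⟨w, hw, h', hcx⟩

theorem HasTwoValidColoring.induce_compl_diff (hN : ∀ v ∈ I, G.neighborSet v = T)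
    (hIT : Disjoint I T) {W : Set V} (hW : W ⊆ I) (hT : T.Finite) (hTW : T.encard < W.encard)
    (h : G.HasTwoValidColoring k) : (G.induce (I \ W)ᶜ).HasTwoValidColoring k := by
  classical
  obtain ⟨c, hsurj, hc⟩ := h
  obtain ⟨f, hfW, hf⟩ := hc.exists_mapsTo_color_eq hN hW hT hTW
  have hI := isIndepSet_of_forall_neighborSet_eq hN hIT
  let ρ : G →g G := IsIndepSet.redirect (hI.mono hW) f fun w hw => by
    rw [hN w (hW hw), hN (f w) (hfW hw)]
  let ψ : G.induce (I \ W)ᶜ →g G := ρ.comp (Embedding.induce _).toHom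
  refine ⟨c ∘ ψ.mapEdgeSet, ?_, hc.comp_mapEdgeSet ψ⟩
  suffices hcover : ∀ a b (hab : G.Adj a b), a ∉ I → ∃ e, c (ψ.mapEdgeSet e) = c ⟨s(a, b), hab⟩ by
    intro i
    obtain ⟨⟨e, he⟩, rfl⟩ := hsurj i
    induction e using Sym2.ind with | _ a b => ?_
    by_cases ha : a ∈ I
    · have hb : b ∉ I := fun hb => hI ha hb (G.ne_of_adj he) he
      obtain ⟨e', he'⟩ := hcover b a he.symm hb
      exact ⟨e', he'.trans (congrArg c (Subtype.ext Sym2.eq_swap))⟩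
    · exact hcover a b he ha
  intro a b hab ha
  have haK : a ∈ (I \ W)ᶜ := fun h => ha h.1
  have hρa : ρ a = a := Set.piecewise_eq_of_notMem W f id fun h => ha (hW h)
  by_cases hb : b ∈ I
  · obtain ⟨w, hw, h', hcw⟩ := hf b hb a hab
    have hwa : G.Adj w a := by
      rw [← mem_neighborSet, hN w (hW hw), ← hN b hb]; exact hab.symm
    refine ⟨⟨s(⟨a, haK⟩, ⟨w, fun h => h.2 hw⟩), hwa.symm⟩, hcw ▸ congrArg c (Subtype.ext ?_)⟩
    have hρw : ρ w = f w := Set.piecewise_eq_of_mem W f id hw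
    simp [ψ, hρa, hρw]
  · have hρb : ρ b = b := Set.piecewise_eq_of_notMem W f id fun h => hb (hW h)
    refine ⟨⟨s(⟨a, haK⟩, ⟨b, fun h => hb h.1⟩), hab⟩, congrArg c (Subtype.ext ?_)⟩
    simp [ψ, hρa, hρb]

end Twins

end SimpleGraph

theorem stmt14_general {V : Type*} [Fintype V] (G : SimpleGraph V) (k : ℕ)
    (S : Set V)
    (T : Set V) (hT : T ⊆ S)
    (I : Set V) (hI : I = {v : V | v ∉ S ∧ G.neighborSet v = T})
    (r : ℕ) (hr : r = max 10 (T.ncard + 1))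
    (W : Set V) (hW : W ⊆ I) (hWr : W.ncard = r) :
    (∃ c : G.edgeSet → Fin k, Function.Surjective c ∧ TwoValid c) ↔
    (∃ c : (G.induce ((I \ W)ᶜ)).edgeSet → Fin k, Function.Surjective c ∧ TwoValid c) := by
  have hN : ∀ v ∈ I, G.neighborSet v = T := by
    rw [hI]; exact fun v hv => hv.2
  have hIT : Disjoint I T := by
    rw [hI]; exact Set.disjoint_left.2 fun v hv hvT => hv.1 (hT hvT)
  have hTW : T.encard < W.encard := by
    rw [← T.toFinite.cast_ncard_eq, ← W.toFinite.cast_ncard_eq]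
    exact_mod_cast (show T.ncard < W.ncard by omega)
  obtain ⟨w₀, hw₀⟩ := Set.encard_pos.1 (pos_of_gt hTW)
  exact ⟨SimpleGraph.HasTwoValidColoring.induce_compl_diff hN hIT hW T.toFinite hTW,
    SimpleGraph.HasTwoValidColoring.of_induce_compl
      ((SimpleGraph.isIndepSet_of_forall_neighborSet_eq hN hIT).mono Set.sdiff_subset)
      (fun h => h.2 hw₀) fun a ha => ((hN a ha.1).trans (hN w₀ (hW hw₀)).symm).le⟩

/-- Correctness of the reduction rule (R1): with `S` a vertex cover, `T ⊆ S`,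
`I` the set of vertices outside `S` whose neighborhood is exactly `T`,
`r = max 10 (|T| + 1)` and `|I| > r`, deleting all but `r` vertices of `I`
(keeping a subset `W ⊆ I` with `|W| = r`) yields a graph with a `2`-valid edge coloring
with exactly `k` colors iff `G` has one. -/
theorem stmt14 {V : Type*} [Fintype V] [DecidableEq V] (G : SimpleGraph V) (k : ℕ)
    (hk : 1 ≤ k)
    (S : Set V) (hS : ∀ ⦃a b : V⦄, G.Adj a b → a ∈ S ∨ b ∈ S)
    (T : Set V) (hT : T ⊆ S)
    (I : Set V) (hI : I = {v : V | v ∉ S ∧ G.neighborSet v = T})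
    (r : ℕ) (hr : r = max 10 (T.ncard + 1))
    (hbig : r < I.ncard)
    (W : Set V) (hW : W ⊆ I) (hWr : W.ncard = r) :
    (∃ c : G.edgeSet → Fin k, Function.Surjective c ∧ TwoValid c) ↔
    (∃ c : (G.induce ((I \ W)ᶜ)).edgeSet → Fin k, Function.Surjective c ∧ TwoValid c) :=
  stmt14_general G k S T hT I hI r hr W hW hWr
end
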